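/- arXiv:math/0612117 — 6 statements merged into one kernel-verified Lean document; each statement's English description precedes it below -/
import Mathlib

section
/- Every eigenvalue of a pre-Einstein derivation of a finite-dimensional real Lie algebra is a rational number. -/
open LieAlgebra Module LinearMap

/-- A pre-Einstein derivation: semisimple with all eigenvalues real (i.e. there is a basis of
eigenvectors with real eigenvalues) and `Tr (φ ∘ ψ) = Tr ψ` for every derivation `ψ`. -/
def IsPreEinstein {l : Type*} [LieRing l] [LieAlgebra ℝ l] [FiniteDimensional ℝ l]
    (φ : LieDerivation ℝ l l) : Prop :=
  (∃ (ι : Type) (b : Basis ι ℝ l), ∀ i, ∃ μ : ℝ, φ (b i) = μ • b i) ∧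
  ∀ ψ : LieDerivation ℝ l l,
    trace ℝ l ((φ : l →ₗ[ℝ] l) ∘ₗ (ψ : l →ₗ[ℝ] l)) = trace ℝ l (ψ : l →ₗ[ℝ] l)

private lemma preEinstein_aux_key {l : Type} [LieRing l] [LieAlgebra ℝ l] [FiniteDimensional ℝ l]
    (φ : LieDerivation ℝ l l)
    (htr : ∀ ψ : LieDerivation ℝ l l,
      trace ℝ l ((φ : l →ₗ[ℝ] l) ∘ₗ (ψ : l →ₗ[ℝ] l)) = trace ℝ l (ψ : l →ₗ[ℝ] l))
    {ι : Type} [Fintype ι] (b : Basis ι ℝ l) (ev : ι → ℝ)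
    (hevb : ∀ i, (φ : l →ₗ[ℝ] l) (b i) = ev i • b i)
    (f : ℝ →ₗ[ℚ] ℝ) :
    ∑ i, ev i * f (ev i) = ∑ i, f (ev i) := by
  classical
  have repr_phi : ∀ (c : ι → ℝ), (φ : l →ₗ[ℝ] l) (∑ j, c j • b j) = ∑ j, (c j * ev j) • b j := by
    intro c
    rw [map_sum]
    exact Finset.sum_congr rfl fun j _ => by rw [map_smul, hevb j, smul_smul]
  set T : l →ₗ[ℝ] l := b.constr ℝ (fun i => f (ev i) • b i) with hT
  have hTb : ∀ i, T (b i) = f (ev i) • b i := fun i => b.constr_basis ℝ _ i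
  -- T acts by f(ν) on the ν-eigenspace of φ
  have Tev : ∀ (ν : ℝ) (x : l), (φ : l →ₗ[ℝ] l) x = ν • x → T x = f ν • x := by
    intro ν x hx
    have h1 : (φ : l →ₗ[ℝ] l) (∑ j, b.repr x j • b j) = ν • x := by rw [b.sum_repr x]; exact hx
    rw [repr_phi] at h1
    have h2 : ∀ j, b.repr x j * ev j = ν * b.repr x j := by
      intro j
      have hl := congrFun (b.repr_sum_self (fun j => b.repr x j * ev j)) j
      rw [h1] at hl
      simpa using hl.symm
    calc T x = T (∑ j, b.repr x j • b j) := by rw [b.sum_repr x]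
    _ = ∑ j, b.repr x j • (f (ev j) • b j) := by
        rw [map_sum]; exact Finset.sum_congr rfl fun j _ => by rw [map_smul, hTb j]
    _ = ∑ j, (f ν * b.repr x j) • b j := by
        refine Finset.sum_congr rfl fun j _ => ?_
        rcases eq_or_ne (b.repr x j) 0 with h | h
        · simp [h]
        · have : ev j = ν := by
            have h3 := h2 j
            rw [mul_comm ν _] at h3
            exact mul_left_cancel₀ h h3
          rw [this, smul_smul, mul_comm]
    _ = f ν • x := by
        conv_rhs => rw [← b.sum_repr x]
        rw [Finset.smul_sum]
        exact Finset.sum_congr rfl fun j _ => by rw [smul_smul]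
  -- T satisfies the Leibniz rule
  have sum_lie : ∀ (g : ι → l) (y : l), ⁅∑ i, g i, y⁆ = ∑ i, ⁅g i, y⁆ := fun g y =>
    map_sum (AddMonoidHom.mk' (fun z => ⁅z, y⁆) (fun a c => add_lie a c y)) g Finset.univ
  have lie_sum : ∀ (y : l) (g : ι → l), ⁅y, ∑ i, g i⁆ = ∑ i, ⁅y, g i⁆ := fun y g =>
    map_sum (AddMonoidHom.mk' (fun z => ⁅y, z⁆) (fun a c => lie_add y a c)) g Finset.univ
  have leib_b : ∀ i j, T ⁅b i, b j⁆ = ⁅T (b i), b j⁆ + ⁅b i, T (b j)⁆ := by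
    intro i j
    have h0 : (φ : l →ₗ[ℝ] l) ⁅b i, b j⁆
        = ⁅b i, (φ : l →ₗ[ℝ] l) (b j)⁆ + ⁅(φ : l →ₗ[ℝ] l) (b i), b j⁆ :=
      φ.apply_lie_eq_add (b i) (b j)
    have hmem : (φ : l →ₗ[ℝ] l) ⁅b i, b j⁆ = (ev i + ev j) • ⁅b i, b j⁆ := by
      rw [h0, hevb i, hevb j, smul_lie, lie_smul, add_smul, add_comm]
    rw [Tev _ _ hmem, map_add, add_smul, hTb i, hTb j, smul_lie, lie_smul]
  have leib1 : ∀ i (y : l), T ⁅b i, y⁆ = ⁅T (b i), y⁆ + ⁅b i, T y⁆ := by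
    intro i y
    have hy := b.sum_repr y
    calc T ⁅b i, y⁆ = ∑ j, b.repr y j • T ⁅b i, b j⁆ := by
          conv_lhs => rw [← hy]
          rw [lie_sum, map_sum]
          exact Finset.sum_congr rfl fun j _ => by rw [lie_smul, map_smul]
      _ = ∑ j, b.repr y j • (⁅T (b i), b j⁆ + ⁅b i, T (b j)⁆) :=
          Finset.sum_congr rfl fun j _ => by rw [leib_b i j]
      _ = ⁅T (b i), y⁆ + ⁅b i, T y⁆ := by
          conv_rhs => rw [← hy]
          rw [map_sum, lie_sum, lie_sum, ← Finset.sum_add_distrib]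
          refine Finset.sum_congr rfl fun j _ => ?_
          rw [lie_smul, map_smul, lie_smul, smul_add]
  have leib : ∀ x y : l, T ⁅x, y⁆ = ⁅T x, y⁆ + ⁅x, T y⁆ := by
    intro x y
    have hx := b.sum_repr x
    calc T ⁅x, y⁆ = ∑ i, b.repr x i • T ⁅b i, y⁆ := by
          conv_lhs => rw [← hx]
          rw [sum_lie, map_sum]
          exact Finset.sum_congr rfl fun i _ => by rw [smul_lie, map_smul]
      _ = ∑ i, b.repr x i • (⁅T (b i), y⁆ + ⁅b i, T y⁆) :=
          Finset.sum_congr rfl fun i _ => by rw [leib1 i y]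
      _ = ⁅T x, y⁆ + ⁅x, T y⁆ := by
          conv_rhs => rw [← hx]
          rw [map_sum, sum_lie, sum_lie, ← Finset.sum_add_distrib]
          refine Finset.sum_congr rfl fun i _ => ?_
          rw [map_smul, smul_lie, smul_lie, smul_add]
  set ψ : LieDerivation ℝ l l :=
    { toLinearMap := T
      leibniz' := fun a c => by
        rw [leib a c, sub_eq_add_neg, add_comm]
        congr 1
        rw [← lie_skew (T a) c] } with hψ
  have hψT : (ψ : l →ₗ[ℝ] l) = T := rfl
  have trT : trace ℝ l T = ∑ i, f (ev i) := by
    rw [trace_eq_matrix_trace ℝ b, Matrix.trace]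
    refine Finset.sum_congr rfl fun i _ => ?_
    rw [Matrix.diag_apply, LinearMap.toMatrix_apply, hTb i]
    simp
  have trφT : trace ℝ l ((φ : l →ₗ[ℝ] l) ∘ₗ T) = ∑ i, ev i * f (ev i) := by
    rw [trace_eq_matrix_trace ℝ b, Matrix.trace]
    refine Finset.sum_congr rfl fun i _ => ?_
    rw [Matrix.diag_apply, LinearMap.toMatrix_apply, LinearMap.comp_apply, hTb i, map_smul,
      hevb i]
    simp [smul_smul, mul_comm]
  have := htr ψ
  rw [hψT, trT, trφT] at this
  exact this

private lemma preEinstein_aux_rat {ι : Type} [Fintype ι] (ev : ι → ℝ)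
    (key : ∀ f : ℝ →ₗ[ℚ] ℝ, ∑ i, ev i * f (ev i) = ∑ i, f (ev i)) :
    ∀ i, ∃ r : ℚ, ev i = (r : ℝ) := by
  classical
  set W : Submodule ℚ ℝ := Submodule.span ℚ {(1 : ℝ)} with hW
  obtain ⟨U, hUc⟩ := W.exists_isCompl
  set p : ℝ →ₗ[ℚ] U := U.linearProjOfIsCompl W hUc.symm with hp
  set pW : ℝ →ₗ[ℚ] W := W.linearProjOfIsCompl U hUc with hpW
  have hdecomp : ∀ x : ℝ, ((pW x : ℝ)) + ((p x : ℝ)) = x := fun x =>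
    Submodule.projection_add_projection_eq_self hUc x
  set ν : ι → ℝ := fun i => (p (ev i) : ℝ) with hν
  have hq : ∀ i, ∃ q : ℚ, ev i = (q : ℝ) + ν i := by
    intro i
    obtain ⟨q, hq⟩ := Submodule.mem_span_singleton.mp (pW (ev i)).2
    exact ⟨q, by rw [← hdecomp (ev i), ← hq, Rat.smul_def, mul_one, add_comm]⟩
  choose q hqs using hq
  -- the key identity for functionals through p
  have key2 : ∀ g : Module.Dual ℚ ℝ, ∑ i, (ev i - 1) * ((g (ν i) : ℚ) : ℝ) = 0 := by
    intro g
    have hf := key ((Algebra.linearMap ℚ ℝ).comp (g.comp (U.subtype.comp p)))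
    simp only [LinearMap.comp_apply, Submodule.subtype_apply, Algebra.linearMap_apply,
      Algebra.algebraMap_self, map_ratCast, RingHom.id_apply] at hf
    simp only [sub_mul, one_mul, Finset.sum_sub_distrib]
    rw [sub_eq_zero]
    exact hf
  -- ν i = 0 for all i
  have hν0 : ∀ i, ν i = 0 := by
    intro i
    rw [← Module.forall_dual_apply_eq_zero_iff ℚ (ν i)]
    intro g
    -- split the identity into W- and U-components
    have hsplit := key2 g
    have hrw : ∀ j, (ev j - 1) * ((g (ν j) : ℚ) : ℝ)
        = ((( (q j - 1) * g (ν j) : ℚ)) : ℝ) + (g (ν j) : ℚ) • ν j := by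
      intro j
      rw [hqs j, Rat.smul_def]
      push_cast
      ring
    rw [Finset.sum_congr rfl (fun j _ => hrw j), Finset.sum_add_distrib] at hsplit
    set A : ℚ := ∑ j, (q j - 1) * g (ν j) with hA
    set B : ℝ := ∑ j, (g (ν j) : ℚ) • ν j with hB
    have hAc : ∑ j, ((((q j - 1) * g (ν j) : ℚ)) : ℝ) = (A : ℝ) := by rw [hA]; push_cast; ring
    rw [hAc] at hsplit
    have hBU : B ∈ U := Submodule.sum_mem U fun j _ => Submodule.smul_mem U _ (p (ev j)).2
    have hBW : B ∈ W := by
      have : B = -(A : ℝ) := by linarith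
      rw [this]
      exact Submodule.neg_mem W (Submodule.mem_span_singleton.mpr ⟨A, by simp⟩)
    have hB0 : B = 0 := (Submodule.disjoint_def.mp hUc.disjoint) B hBW hBU
    -- apply g to B = 0
    have hgB : ∑ j, g (ν j) * g (ν j) = 0 := by
      have := congrArg g hB0
      rw [hB, map_sum, map_zero] at this
      simpa [map_smul, smul_eq_mul] using this
    have hall : ∀ j ∈ Finset.univ, g (ν j) * g (ν j) = 0 := by
      rw [← Finset.sum_eq_zero_iff_of_nonneg (fun j _ => mul_self_nonneg (g (ν j)))]
      exact hgB
    have := hall i (Finset.mem_univ i)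
    have := mul_self_eq_zero.mp this
    simpa using this
  intro i
  exact ⟨q i, by rw [hqs i, hν0 i, add_zero]⟩

/-- Every eigenvalue of a pre-Einstein derivation is rational. -/
theorem preEinstein_eigenvalues_rational (l : Type) [LieRing l] [LieAlgebra ℝ l]
    [FiniteDimensional ℝ l] (φ : LieDerivation ℝ l l) (h : IsPreEinstein φ)
    (μ : ℝ) (hμ : Module.End.HasEigenvalue (φ : l →ₗ[ℝ] l) μ) :
    ∃ r : ℚ, μ = (r : ℝ) := by
  obtain ⟨⟨ι, b, hb⟩, htr⟩ := h
  haveI : Fintype ι := FiniteDimensional.fintypeBasisIndex b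
  set ev : ι → ℝ := fun i => (hb i).choose with hevdef
  have hevb : ∀ i, (φ : l →ₗ[ℝ] l) (b i) = ev i • b i := fun i => (hb i).choose_spec
  have repr_phi : ∀ (c : ι → ℝ), (φ : l →ₗ[ℝ] l) (∑ j, c j • b j) = ∑ j, (c j * ev j) • b j := by
    intro c
    rw [map_sum]
    exact Finset.sum_congr rfl fun j _ => by rw [map_smul, hevb j, smul_smul]
  -- μ is one of the eigenvalues ev k
  obtain ⟨x, hx⟩ := hμ.exists_hasEigenvector
  have hxr : ∃ i, b.repr x i ≠ 0 := by
    by_contra hcon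
    push_neg at hcon
    apply hx.right
    have : b.repr x = 0 := Finsupp.ext fun i => hcon i
    simpa using congrArg b.repr.symm this
  obtain ⟨k, hk⟩ := hxr
  have hx1 : (φ : l →ₗ[ℝ] l) x = μ • x := hx.apply_eq_smul
  have hμk : ev k = μ := by
    have h1 : (φ : l →ₗ[ℝ] l) (∑ j, b.repr x j • b j) = μ • x := by rw [b.sum_repr x]; exact hx1
    rw [repr_phi] at h1
    have h2 : ∀ j, b.repr x j * ev j = μ * b.repr x j := by
      intro j
      have hl := congrFun (b.repr_sum_self (fun j => b.repr x j * ev j)) j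
      rw [h1] at hl
      simpa using hl.symm
    have h3 := h2 k
    rw [mul_comm μ _] at h3
    exact mul_left_cancel₀ hk h3
  obtain ⟨r, hr⟩ := preEinstein_aux_rat ev (fun f => preEinstein_aux_key φ htr b ev hevb f) k
  exact ⟨r, by rw [← hμk, hr]⟩
end

section
/- Let (l,⟨·,·⟩) be a metric Lie algebra, let S be a symmetric endomorphism of l and K a skew-symmetric endomorphism of l. Then Ξ(S, K) = −Ξ(SK, id) = Ξ(KS, id). -/
open LieAlgebra Module LinearMap

section helpers
variable {l : Type} [LieRing l] [LieAlgebra ℝ l] {ι : Type} [Fintype ι] [DecidableEq ι]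

/-- bracketing on the right as a linear map -/
def brR (c : l) : l →ₗ[ℝ] l where
  toFun x := ⁅x, c⁆
  map_add' x y := add_lie x y c
  map_smul' a x := smul_lie a x c

/-- bracketing on the left as a linear map -/
def brL (c : l) : l →ₗ[ℝ] l where
  toFun x := ⁅c, x⁆
  map_add' x y := lie_add c x y
  map_smul' a x := lie_smul a c x

@[simp] lemma brR_apply (c x : l) : brR c x = ⁅x, c⁆ := rfl
@[simp] lemma brL_apply (c x : l) : brL c x = ⁅c, x⁆ := rfl

lemma expand_onb (B : l →ₗ[ℝ] l →ₗ[ℝ] ℝ) (E : Basis ι ℝ l)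
    (hONB : ∀ i j, B (E i) (E j) = if i = j then (1:ℝ) else 0) (X : l) :
    X = ∑ k, B X (E k) • E k := by
  have hrep : ∀ k, B X (E k) = E.repr X k := by
    intro k
    conv_lhs => rw [← E.sum_repr X]
    rw [map_sum, LinearMap.sum_apply]
    simp only [map_smul, LinearMap.smul_apply, hONB, smul_eq_mul, mul_ite, mul_one, mul_zero]
    simp [Finset.sum_ite_eq']
  simp only [hrep]
  exact (E.sum_repr X).symm

lemma move_onb (B : l →ₗ[ℝ] l →ₗ[ℝ] ℝ) (E : Basis ι ℝ l)
    (hsymm : ∀ X Y : l, B X Y = B Y X)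
    (hONB : ∀ i j, B (E i) (E j) = if i = j then (1:ℝ) else 0)
    (f g A A' : l →ₗ[ℝ] l)
    (hadj : ∀ X Y : l, B (A X) Y = B X (A' Y)) :
    ∑ i, B (f (A (E i))) (g (E i)) = ∑ i, B (f (E i)) (g (A' (E i))) := by
  have h1 : ∀ i : ι, B (f (A (E i))) (g (E i))
      = ∑ k, B (E i) (A' (E k)) * B (f (E k)) (g (E i)) := by
    intro i
    conv_lhs => rw [expand_onb B E hONB (A (E i))]
    rw [map_sum, map_sum, LinearMap.sum_apply]
    refine Finset.sum_congr rfl fun k _ => ?_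
    rw [map_smul, map_smul, LinearMap.smul_apply, smul_eq_mul, hadj]
  have h2 : ∀ i : ι, B (f (E i)) (g (A' (E i)))
      = ∑ k, B (E k) (A' (E i)) * B (f (E i)) (g (E k)) := by
    intro i
    conv_lhs => rw [expand_onb B E hONB (A' (E i))]
    rw [map_sum, map_sum]
    refine Finset.sum_congr rfl fun k _ => ?_
    rw [map_smul, map_smul, smul_eq_mul, hsymm (A' (E i)) (E k)]
  rw [Finset.sum_congr rfl fun i _ => h1 i, Finset.sum_congr rfl fun i _ => h2 i,
      Finset.sum_comm]

theorem xi_aux (B : l →ₗ[ℝ] l →ₗ[ℝ] ℝ) (E : Basis ι ℝ l)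
    (hsymm : ∀ X Y : l, B X Y = B Y X)
    (hONB : ∀ i j, B (E i) (E j) = if i = j then (1:ℝ) else 0)
    (S K : l →ₗ[ℝ] l)
    (hS : ∀ X Y : l, B (S X) Y = B X (S Y))
    (hK : ∀ X Y : l, B (K X) Y = -B X (K Y)) :
    (∑ i, ∑ j, B (-(S ⁅E i, E j⁆) + ⁅S (E i), E j⁆ + ⁅E i, S (E j)⁆)
        (-(K ⁅E i, E j⁆) + ⁅K (E i), E j⁆ + ⁅E i, K (E j)⁆))
      = -(∑ i, ∑ j, B (-((S ∘ₗ K) ⁅E i, E j⁆) + ⁅(S ∘ₗ K) (E i), E j⁆ + ⁅E i, (S ∘ₗ K) (E j)⁆)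
          (-((LinearMap.id : l →ₗ[ℝ] l) ⁅E i, E j⁆) + ⁅(LinearMap.id : l →ₗ[ℝ] l) (E i), E j⁆ + ⁅E i, (LinearMap.id : l →ₗ[ℝ] l) (E j)⁆))
    ∧ (∑ i, ∑ j, B (-(S ⁅E i, E j⁆) + ⁅S (E i), E j⁆ + ⁅E i, S (E j)⁆)
        (-(K ⁅E i, E j⁆) + ⁅K (E i), E j⁆ + ⁅E i, K (E j)⁆))
      = (∑ i, ∑ j, B (-((K ∘ₗ S) ⁅E i, E j⁆) + ⁅(K ∘ₗ S) (E i), E j⁆ + ⁅E i, (K ∘ₗ S) (E j)⁆)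
          (-((LinearMap.id : l →ₗ[ℝ] l) ⁅E i, E j⁆) + ⁅(LinearMap.id : l →ₗ[ℝ] l) (E i), E j⁆ + ⁅E i, (LinearMap.id : l →ₗ[ℝ] l) (E j)⁆)) := by
  have hsk : ∀ x y : l, ⁅y, x⁆ = -⁅x, y⁆ := fun x y => by rw [← lie_skew x y, neg_neg]
  have hadjK : ∀ X Y : l, B (K X) Y = B X ((-K) Y) := by
    intro X Y; rw [hK]; simp
  have moveS : ∀ f g : l →ₗ[ℝ] l,
      (∑ i, B (f (S (E i))) (g (E i))) = ∑ i, B (f (E i)) (g (S (E i))) :=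
    fun f g => move_onb B E hsymm hONB f g S S hS
  have moveK : ∀ f g : l →ₗ[ℝ] l,
      (∑ i, B (f (K (E i))) (g (E i))) = -∑ i, B (f (E i)) (g (K (E i))) := by
    intro f g
    rw [move_onb B E hsymm hONB f g K (-K) hadjK, ← Finset.sum_neg_distrib]
    exact Finset.sum_congr rfl fun i _ => by simp
  -- zero lemmas
  have Z1 : (∑ i, ∑ j, B (S ⁅E i, E j⁆) ⁅K (E i), E j⁆) = 0 := by
    have hrow : ∀ j, (∑ i, B (S ⁅E i, E j⁆) ⁅K (E i), E j⁆)
        = -∑ i, B (S ⁅E i, E j⁆) ⁅K (E i), E j⁆ := by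
      intro j
      calc (∑ i, B (S ⁅E i, E j⁆) ⁅K (E i), E j⁆)
          = ∑ i, B ((brR (E j)) (K (E i))) ((S ∘ₗ brR (E j)) (E i)) :=
            Finset.sum_congr rfl fun i _ => hsymm _ _
        _ = -∑ i, B ((brR (E j)) (E i)) ((S ∘ₗ brR (E j)) (K (E i))) := moveK _ _
        _ = -∑ i, B (S ⁅E i, E j⁆) ⁅K (E i), E j⁆ := by
            congr 1
            exact Finset.sum_congr rfl fun i _ => (hS ⁅E i, E j⁆ ⁅K (E i), E j⁆).symm
    have h2 : (∑ j, ∑ i, B (S ⁅E i, E j⁆) ⁅K (E i), E j⁆)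
        = -(∑ j, ∑ i, B (S ⁅E i, E j⁆) ⁅K (E i), E j⁆) := by
      rw [← Finset.sum_neg_distrib]
      exact Finset.sum_congr rfl fun j _ => hrow j
    rw [Finset.sum_comm]; linarith [h2]
  have Z2 : (∑ i, ∑ j, B ⁅S (E i), E j⁆ (K ⁅E i, E j⁆)) = 0 := by
    have hrow : ∀ j, (∑ i, B ⁅S (E i), E j⁆ (K ⁅E i, E j⁆))
        = -∑ i, B ⁅S (E i), E j⁆ (K ⁅E i, E j⁆) := by
      intro j
      calc (∑ i, B ⁅S (E i), E j⁆ (K ⁅E i, E j⁆))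
          = ∑ i, B ((brR (E j)) (S (E i))) ((K ∘ₗ brR (E j)) (E i)) :=
            Finset.sum_congr rfl fun i _ => rfl
        _ = ∑ i, B ((brR (E j)) (E i)) ((K ∘ₗ brR (E j)) (S (E i))) := moveS _ _
        _ = -∑ i, B ⁅S (E i), E j⁆ (K ⁅E i, E j⁆) := by
            rw [← Finset.sum_neg_distrib]
            refine Finset.sum_congr rfl fun i _ => ?_
            show B ⁅E i, E j⁆ (K ⁅S (E i), E j⁆) = -B ⁅S (E i), E j⁆ (K ⁅E i, E j⁆)
            rw [hsymm, hK]
    have h2 : (∑ j, ∑ i, B ⁅S (E i), E j⁆ (K ⁅E i, E j⁆))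
        = -(∑ j, ∑ i, B ⁅S (E i), E j⁆ (K ⁅E i, E j⁆)) := by
      rw [← Finset.sum_neg_distrib]
      exact Finset.sum_congr rfl fun j _ => hrow j
    rw [Finset.sum_comm]; linarith [h2]
  have Z7 : (∑ i, ∑ j, B ⁅S (E i), E j⁆ ⁅E i, K (E j)⁆) = 0 := by
    have step1 : (∑ j, ∑ i, B ⁅S (E i), E j⁆ ⁅E i, K (E j)⁆)
        = ∑ j, ∑ i, B ⁅E i, E j⁆ ⁅S (E i), K (E j)⁆ := by
      refine Finset.sum_congr rfl fun j _ => ?_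
      calc (∑ i, B ⁅S (E i), E j⁆ ⁅E i, K (E j)⁆)
          = ∑ i, B ((brR (E j)) (S (E i))) ((brR (K (E j))) (E i)) :=
            Finset.sum_congr rfl fun i _ => rfl
        _ = ∑ i, B ((brR (E j)) (E i)) ((brR (K (E j))) (S (E i))) := moveS _ _
        _ = ∑ i, B ⁅E i, E j⁆ ⁅S (E i), K (E j)⁆ := rfl
    have step2 : ∀ i, (∑ j, B ⁅E i, E j⁆ ⁅S (E i), K (E j)⁆)
        = -∑ j, B ⁅S (E i), E j⁆ ⁅E i, K (E j)⁆ := by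
      intro i
      calc (∑ j, B ⁅E i, E j⁆ ⁅S (E i), K (E j)⁆)
          = ∑ j, B ((brL (S (E i))) (K (E j))) ((brL (E i)) (E j)) :=
            Finset.sum_congr rfl fun j _ => hsymm _ _
        _ = -∑ j, B ((brL (S (E i))) (E j)) ((brL (E i)) (K (E j))) := moveK _ _
        _ = -∑ j, B ⁅S (E i), E j⁆ ⁅E i, K (E j)⁆ := rfl
    have h2 : (∑ i, ∑ j, B ⁅S (E i), E j⁆ ⁅E i, K (E j)⁆)
        = -(∑ i, ∑ j, B ⁅S (E i), E j⁆ ⁅E i, K (E j)⁆) := by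
      conv_lhs => rw [Finset.sum_comm, step1, Finset.sum_comm]
      rw [← Finset.sum_neg_distrib]
      exact Finset.sum_congr rfl fun i _ => step2 i
    linarith [h2]
  -- relation lemmas
  have R1 : (∑ i, ∑ j, B (S (K ⁅E i, E j⁆)) ⁅E i, E j⁆)
      = ∑ i, ∑ j, B (S ⁅E i, E j⁆) (K ⁅E i, E j⁆) := by
    refine Finset.sum_congr rfl fun i _ => Finset.sum_congr rfl fun j _ => ?_
    rw [hS, hsymm, hS]
  have R1' : (∑ i, ∑ j, B (K (S ⁅E i, E j⁆)) ⁅E i, E j⁆)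
      = -∑ i, ∑ j, B (S ⁅E i, E j⁆) (K ⁅E i, E j⁆) := by
    rw [← Finset.sum_neg_distrib]
    refine Finset.sum_congr rfl fun i _ => ?_
    rw [← Finset.sum_neg_distrib]
    refine Finset.sum_congr rfl fun j _ => ?_
    rw [hK]
  have R6a : (∑ i, ∑ j, B ⁅S (K (E i)), E j⁆ ⁅E i, E j⁆)
      = -∑ i, ∑ j, B ⁅S (E i), E j⁆ ⁅K (E i), E j⁆ := by
    rw [Finset.sum_comm]
    conv_rhs => rw [Finset.sum_comm (f := fun i j => B ⁅S (E i), E j⁆ ⁅K (E i), E j⁆)]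
    rw [← Finset.sum_neg_distrib]
    refine Finset.sum_congr rfl fun j _ => ?_
    calc (∑ i, B ⁅S (K (E i)), E j⁆ ⁅E i, E j⁆)
        = ∑ i, B ((brR (E j)) (E i)) ((brR (E j) ∘ₗ S) (K (E i))) :=
          Finset.sum_congr rfl fun i _ => hsymm _ _
      _ = -∑ i, B ((brR (E j)) (K (E i))) ((brR (E j) ∘ₗ S) (E i)) := by
          have := moveK (brR (E j)) (brR (E j) ∘ₗ S)
          linarith [this]
      _ = -∑ i, B ⁅S (E i), E j⁆ ⁅K (E i), E j⁆ := by
          congr 1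
          exact Finset.sum_congr rfl fun i _ => hsymm _ _
  have R6b : (∑ i, ∑ j, B ⁅K (S (E i)), E j⁆ ⁅E i, E j⁆)
      = ∑ i, ∑ j, B ⁅S (E i), E j⁆ ⁅K (E i), E j⁆ := by
    rw [Finset.sum_comm]
    conv_rhs => rw [Finset.sum_comm (f := fun i j => B ⁅S (E i), E j⁆ ⁅K (E i), E j⁆)]
    refine Finset.sum_congr rfl fun j _ => ?_
    calc (∑ i, B ⁅K (S (E i)), E j⁆ ⁅E i, E j⁆)
        = ∑ i, B ((brR (E j) ∘ₗ K) (S (E i))) ((brR (E j)) (E i)) :=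
          Finset.sum_congr rfl fun i _ => rfl
      _ = ∑ i, B ((brR (E j) ∘ₗ K) (E i)) ((brR (E j)) (S (E i))) := moveS _ _
      _ = ∑ i, B ⁅S (E i), E j⁆ ⁅K (E i), E j⁆ :=
          Finset.sum_congr rfl fun i _ => hsymm _ _
  -- swap lemmas (i ↔ j)
  have SwapA : (∑ i, ∑ j, B (S ⁅E i, E j⁆) ⁅E i, K (E j)⁆)
      = ∑ i, ∑ j, B (S ⁅E i, E j⁆) ⁅K (E i), E j⁆ := by
    rw [Finset.sum_comm]
    refine Finset.sum_congr rfl fun i _ => Finset.sum_congr rfl fun j _ => ?_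
    rw [hsk (E i) (E j), hsk (K (E i)) (E j)]
    simp only [map_neg, LinearMap.neg_apply, neg_neg]
  have SwapB : (∑ i, ∑ j, B ⁅E i, S (E j)⁆ (K ⁅E i, E j⁆))
      = ∑ i, ∑ j, B ⁅S (E i), E j⁆ (K ⁅E i, E j⁆) := by
    rw [Finset.sum_comm]
    refine Finset.sum_congr rfl fun i _ => Finset.sum_congr rfl fun j _ => ?_
    rw [hsk (E i) (E j), hsk (S (E i)) (E j)]
    simp only [map_neg, LinearMap.neg_apply, neg_neg]
  have SwapC : (∑ i, ∑ j, B ⁅E i, S (E j)⁆ ⁅K (E i), E j⁆)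
      = ∑ i, ∑ j, B ⁅S (E i), E j⁆ ⁅E i, K (E j)⁆ := by
    rw [Finset.sum_comm]
    refine Finset.sum_congr rfl fun i _ => Finset.sum_congr rfl fun j _ => ?_
    rw [hsk (S (E i)) (E j), hsk (E i) (K (E j))]
    simp only [map_neg, LinearMap.neg_apply, neg_neg]
  have SwapD : (∑ i, ∑ j, B ⁅E i, S (E j)⁆ ⁅E i, K (E j)⁆)
      = ∑ i, ∑ j, B ⁅S (E i), E j⁆ ⁅K (E i), E j⁆ := by
    rw [Finset.sum_comm]
    refine Finset.sum_congr rfl fun i _ => Finset.sum_congr rfl fun j _ => ?_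
    rw [hsk (S (E i)) (E j), hsk (K (E i)) (E j)]
    simp only [map_neg, LinearMap.neg_apply, neg_neg]
  have SwapE1 : (∑ i, ∑ j, B ⁅E i, S (K (E j))⁆ ⁅E i, E j⁆)
      = ∑ i, ∑ j, B ⁅S (K (E i)), E j⁆ ⁅E i, E j⁆ := by
    rw [Finset.sum_comm]
    refine Finset.sum_congr rfl fun i _ => Finset.sum_congr rfl fun j _ => ?_
    rw [hsk (S (K (E i))) (E j), hsk (E i) (E j)]
    simp only [map_neg, LinearMap.neg_apply, neg_neg]
  have SwapE2 : (∑ i, ∑ j, B ⁅E i, K (S (E j))⁆ ⁅E i, E j⁆)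
      = ∑ i, ∑ j, B ⁅K (S (E i)), E j⁆ ⁅E i, E j⁆ := by
    rw [Finset.sum_comm]
    refine Finset.sum_congr rfl fun i _ => Finset.sum_congr rfl fun j _ => ?_
    rw [hsk (K (S (E i))) (E j), hsk (E i) (E j)]
    simp only [map_neg, LinearMap.neg_apply, neg_neg]
  -- expansion
  have hexpand : ∀ P Q : l →ₗ[ℝ] l,
      (∑ i, ∑ j, B (-(P ⁅E i, E j⁆) + ⁅P (E i), E j⁆ + ⁅E i, P (E j)⁆)
          (-(Q ⁅E i, E j⁆) + ⁅Q (E i), E j⁆ + ⁅E i, Q (E j)⁆))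
      = (∑ i, ∑ j, B (P ⁅E i, E j⁆) (Q ⁅E i, E j⁆))
        - (∑ i, ∑ j, B (P ⁅E i, E j⁆) ⁅Q (E i), E j⁆)
        - (∑ i, ∑ j, B (P ⁅E i, E j⁆) ⁅E i, Q (E j)⁆)
        - (∑ i, ∑ j, B ⁅P (E i), E j⁆ (Q ⁅E i, E j⁆))
        - (∑ i, ∑ j, B ⁅E i, P (E j)⁆ (Q ⁅E i, E j⁆))
        + (∑ i, ∑ j, B ⁅P (E i), E j⁆ ⁅Q (E i), E j⁆)
        + (∑ i, ∑ j, B ⁅P (E i), E j⁆ ⁅E i, Q (E j)⁆)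
        + (∑ i, ∑ j, B ⁅E i, P (E j)⁆ ⁅Q (E i), E j⁆)
        + (∑ i, ∑ j, B ⁅E i, P (E j)⁆ ⁅E i, Q (E j)⁆) := by
    intro P Q
    have point : ∀ i j,
        B (-(P ⁅E i, E j⁆) + ⁅P (E i), E j⁆ + ⁅E i, P (E j)⁆)
          (-(Q ⁅E i, E j⁆) + ⁅Q (E i), E j⁆ + ⁅E i, Q (E j)⁆)
        = B (P ⁅E i, E j⁆) (Q ⁅E i, E j⁆)
          - B (P ⁅E i, E j⁆) ⁅Q (E i), E j⁆
          - B (P ⁅E i, E j⁆) ⁅E i, Q (E j)⁆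
          - B ⁅P (E i), E j⁆ (Q ⁅E i, E j⁆)
          - B ⁅E i, P (E j)⁆ (Q ⁅E i, E j⁆)
          + B ⁅P (E i), E j⁆ ⁅Q (E i), E j⁆
          + B ⁅P (E i), E j⁆ ⁅E i, Q (E j)⁆
          + B ⁅E i, P (E j)⁆ ⁅Q (E i), E j⁆
          + B ⁅E i, P (E j)⁆ ⁅E i, Q (E j)⁆ := by
      intro i j
      simp only [map_add, map_neg, LinearMap.add_apply, LinearMap.neg_apply]
      ring
    calc _ = ∑ i : ι, ∑ j : ι,
        (B (P ⁅E i, E j⁆) (Q ⁅E i, E j⁆)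
          - B (P ⁅E i, E j⁆) ⁅Q (E i), E j⁆
          - B (P ⁅E i, E j⁆) ⁅E i, Q (E j)⁆
          - B ⁅P (E i), E j⁆ (Q ⁅E i, E j⁆)
          - B ⁅E i, P (E j)⁆ (Q ⁅E i, E j⁆)
          + B ⁅P (E i), E j⁆ ⁅Q (E i), E j⁆
          + B ⁅P (E i), E j⁆ ⁅E i, Q (E j)⁆
          + B ⁅E i, P (E j)⁆ ⁅Q (E i), E j⁆
          + B ⁅E i, P (E j)⁆ ⁅E i, Q (E j)⁆) :=
        Finset.sum_congr rfl fun i _ => Finset.sum_congr rfl fun j _ => point i j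
      _ = _ := by
        simp only [Finset.sum_sub_distrib, Finset.sum_add_distrib]
  constructor
  · rw [hexpand S K, hexpand (S ∘ₗ K) LinearMap.id]
    simp only [LinearMap.comp_apply, LinearMap.id_apply]
    linarith [Z1, Z2, Z7, R1, R6a, SwapA, SwapB, SwapC, SwapD, SwapE1]
  · rw [hexpand S K, hexpand (K ∘ₗ S) LinearMap.id]
    simp only [LinearMap.comp_apply, LinearMap.id_apply]
    linarith [Z1, Z2, Z7, R1', R6b, SwapA, SwapB, SwapC, SwapD, SwapE2]

end helpers

/-- A raw inner product on a real vector space: symmetric, bilinear, positive definite. -/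
def IsInnerProduct (g : Type*) [AddCommGroup g] [Module ℝ g] (ip : g → g → ℝ) : Prop :=
  (∀ X Y : g, ip X Y = ip Y X) ∧
  (∀ (a : ℝ) (X X' Y : g), ip (a • X + X') Y = a * ip X Y + ip X' Y) ∧
  (∀ X : g, X ≠ 0 → 0 < ip X X)

/-- A basis is orthonormal with respect to a raw inner product. -/
def IsONB {g : Type*} [AddCommGroup g] [Module ℝ g] {ι : Type}
    (ip : g → g → ℝ) (E : Basis ι ℝ g) : Prop :=
  ∀ i j, (i = j → ip (E i) (E j) = 1) ∧ (i ≠ j → ip (E i) (E j) = 0)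

/-- The coboundary-type bilinear form `Ξ(A₁, A₂) = ⟨δ(A₁), δ(A₂)⟩`, computed in an
orthonormal basis `E`, where `δ(A)(X,Y) = -A[X,Y] + [AX,Y] + [X,AY]`. -/
noncomputable def XiForm {l : Type*} [LieRing l] [LieAlgebra ℝ l] {ι : Type} [Fintype ι]
    (ip : l → l → ℝ) (E : Basis ι ℝ l) (A₁ A₂ : l →ₗ[ℝ] l) : ℝ :=
  ∑ i, ∑ j,
    ip (-(A₁ ⁅E i, E j⁆) + ⁅A₁ (E i), E j⁆ + ⁅E i, A₁ (E j)⁆)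
       (-(A₂ ⁅E i, E j⁆) + ⁅A₂ (E i), E j⁆ + ⁅E i, A₂ (E j)⁆)

/-- Lemma 3.2 (equation (3.8)): for a symmetric `S` and a skew-symmetric `K`,
`Ξ(S, K) = -Ξ(SK, id) = Ξ(KS, id)`. -/
theorem xi_symm_skew (l : Type) [LieRing l] [LieAlgebra ℝ l] [FiniteDimensional ℝ l]
    (ip : l → l → ℝ) (hip : IsInnerProduct l ip)
    (S K : l →ₗ[ℝ] l)
    (hS : ∀ X Y : l, ip (S X) Y = ip X (S Y))
    (hK : ∀ X Y : l, ip (K X) Y = -ip X (K Y)) :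
    ∀ (ι : Type) (_ : Fintype ι) (E : Basis ι ℝ l), IsONB ip E →
      XiForm ip E S K = -XiForm ip E (S ∘ₗ K) LinearMap.id ∧
      XiForm ip E S K = XiForm ip E (K ∘ₗ S) LinearMap.id := by
  intro ι hF E hE
  haveI := Classical.decEq ι
  obtain ⟨hsy, hbil, -⟩ := hip
  have hadd : ∀ X X' Y : l, ip (X + X') Y = ip X Y + ip X' Y := by
    intro X X' Y
    have h := hbil 1 X X' Y
    rw [one_smul, one_mul] at h
    exact h
  have h0 : ∀ Y : l, ip 0 Y = 0 := by
    intro Y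
    have h := hadd 0 0 Y
    rw [add_zero] at h
    linarith
  have hsmul : ∀ (a : ℝ) (X Y : l), ip (a • X) Y = a * ip X Y := by
    intro a X Y
    have h := hbil a X 0 Y
    rw [add_zero, h0] at h
    linarith
  have hadd' : ∀ (X Y Y' : l), ip X (Y + Y') = ip X Y + ip X Y' := by
    intro X Y Y'; rw [hsy, hadd, hsy Y X, hsy Y' X]
  have hsmul' : ∀ (a : ℝ) (X Y : l), ip X (a • Y) = a * ip X Y := by
    intro a X Y; rw [hsy, hsmul, hsy Y X]
  set B : l →ₗ[ℝ] l →ₗ[ℝ] ℝ :=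
    LinearMap.mk₂ ℝ ip (fun X X' Y => hadd X X' Y)
      (fun a X Y => by rw [smul_eq_mul]; exact hsmul a X Y)
      (fun X Y Y' => hadd' X Y Y')
      (fun a X Y => by rw [smul_eq_mul]; exact hsmul' a X Y) with hB
  have hBip : ∀ X Y : l, B X Y = ip X Y := fun _ _ => rfl
  have hsymm : ∀ X Y : l, B X Y = B Y X := fun X Y => hsy X Y
  have hONB : ∀ i j, B (E i) (E j) = if i = j then (1:ℝ) else 0 := by
    intro i j
    by_cases h : i = j
    · rw [if_pos h]; exact (hE i j).1 h
    · rw [if_neg h]; exact (hE i j).2 h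
  have hS' : ∀ X Y : l, B (S X) Y = B X (S Y) := fun X Y => hS X Y
  have hK' : ∀ X Y : l, B (K X) Y = -B X (K Y) := fun X Y => hK X Y
  have main := xi_aux B E hsymm hONB S K hS' hK'
  simp only [hBip] at main
  exact main
end

section
/- Let l1 and l2 be finite-dimensional real Lie algebras with pre-Einstein derivations φ1 and φ2, respectively. Then the derivation φ1 ⊕ φ2 (acting as φ1 on l1 and as φ2 on l2) is a pre-Einstein derivation of the Lie algebra direct sum l1 ⊕ l2. -/
open LieAlgebra Module LinearMap

/-- Componentwise bracket on the product of two Lie rings. -/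
instance prodBracket {L M : Type*} [LieRing L] [LieRing M] : Bracket (L × M) (L × M) :=
  ⟨fun x y => (⁅x.1, y.1⁆, ⁅x.2, y.2⁆)⟩

/-- The direct sum (product) of two Lie rings. -/
instance prodLieRing {L M : Type*} [LieRing L] [LieRing M] : LieRing (L × M) where
  add_lie x y z := Prod.ext (add_lie x.1 y.1 z.1) (add_lie x.2 y.2 z.2)
  lie_add x y z := Prod.ext (lie_add x.1 y.1 z.1) (lie_add x.2 y.2 z.2)
  lie_self x := Prod.ext (lie_self x.1) (lie_self x.2)
  leibniz_lie x y z := Prod.ext (leibniz_lie x.1 y.1 z.1) (leibniz_lie x.2 y.2 z.2)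

/-- The direct sum (product) of two real Lie algebras. -/
instance prodLieAlgebra {L M : Type*} [LieRing L] [LieRing M] [LieAlgebra ℝ L]
    [LieAlgebra ℝ M] : LieAlgebra ℝ (L × M) where
  lie_smul t x y := Prod.ext (lie_smul t x.1 y.1) (lie_smul t x.2 y.2)

lemma trace_prod_blocks {M N : Type*} [AddCommGroup M] [Module ℝ M] [FiniteDimensional ℝ M]
    [AddCommGroup N] [Module ℝ N] [FiniteDimensional ℝ N] (f : (M × N) →ₗ[ℝ] (M × N)) :
    trace ℝ (M × N) f =
      trace ℝ M (fst ℝ M N ∘ₗ f ∘ₗ inl ℝ M N) + trace ℝ N (snd ℝ M N ∘ₗ f ∘ₗ inr ℝ M N) := by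
  classical
  let b₁ := finBasis ℝ M
  let b₂ := finBasis ℝ N
  let b := b₁.prod b₂
  rw [trace_eq_matrix_trace ℝ b f, trace_eq_matrix_trace ℝ b₁, trace_eq_matrix_trace ℝ b₂,
    Matrix.trace, Matrix.trace, Matrix.trace]
  simp only [Matrix.diag_apply, toMatrix_apply]
  rw [Fintype.sum_sum_type]
  congr 1 <;> apply Finset.sum_congr rfl <;> intro i _
  · rw [Basis.prod_repr_inl]
    congr 2
    simp [b, Basis.prod_apply, Prod.ext_iff]
  · rw [Basis.prod_repr_inr]
    congr 2
    simp [b, Basis.prod_apply, Prod.ext_iff]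

/-- The upper-left block of a derivation of a product is a derivation. -/
def derBlockFst {L M : Type*} [LieRing L] [LieRing M] [LieAlgebra ℝ L] [LieAlgebra ℝ M]
    (ψ : LieDerivation ℝ (L × M) (L × M)) : LieDerivation ℝ L L where
  toLinearMap := fst ℝ L M ∘ₗ (ψ : (L × M) →ₗ[ℝ] (L × M)) ∘ₗ inl ℝ L M
  leibniz' a b := by
    have h := ψ.leibniz' (a, 0) (b, 0)
    have hbr : (⁅(a, (0 : M)), (b, (0 : M))⁆ : L × M) = ((⁅a, b⁆ : L), 0) := by
      show ((⁅a,b⁆ : L), (⁅(0:M),(0:M)⁆ : M)) = _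
      simp
    rw [hbr] at h
    have h1 := congrArg Prod.fst h
    simpa using h1

/-- The lower-right block of a derivation of a product is a derivation. -/
def derBlockSnd {L M : Type*} [LieRing L] [LieRing M] [LieAlgebra ℝ L] [LieAlgebra ℝ M]
    (ψ : LieDerivation ℝ (L × M) (L × M)) : LieDerivation ℝ M M where
  toLinearMap := snd ℝ L M ∘ₗ (ψ : (L × M) →ₗ[ℝ] (L × M)) ∘ₗ inr ℝ L M
  leibniz' a b := by
    have h := ψ.leibniz' ((0 : L), a) ((0 : L), b)
    have hbr : (⁅((0 : L), a), ((0 : L), b)⁆ : L × M) = ((0 : L), (⁅a, b⁆ : M)) := by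
      show ((⁅(0:L),(0:L)⁆ : L), (⁅a,b⁆ : M)) = _
      simp
    rw [hbr] at h
    have h2 := congrArg Prod.snd h
    simpa using h2

/-- Lemma 3.2 (3): the direct sum of pre-Einstein derivations is a pre-Einstein derivation of
the direct sum. -/
theorem preEinstein_prod (l₁ l₂ : Type) [LieRing l₁] [LieAlgebra ℝ l₁] [FiniteDimensional ℝ l₁]
    [LieRing l₂] [LieAlgebra ℝ l₂] [FiniteDimensional ℝ l₂]
    (φ₁ : LieDerivation ℝ l₁ l₁) (φ₂ : LieDerivation ℝ l₂ l₂)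
    (h₁ : IsPreEinstein φ₁) (h₂ : IsPreEinstein φ₂)
    (φ : LieDerivation ℝ (l₁ × l₂) (l₁ × l₂))
    (hφ : ∀ x : l₁ × l₂, φ x = (φ₁ x.1, φ₂ x.2)) :
    IsPreEinstein φ := by
  constructor
  · obtain ⟨ι₁, b₁, hb₁⟩ := h₁.1
    obtain ⟨ι₂, b₂, hb₂⟩ := h₂.1
    refine ⟨ι₁ ⊕ ι₂, b₁.prod b₂, ?_⟩
    rintro (i | i)
    · obtain ⟨μ, hμ⟩ := hb₁ i
      refine ⟨μ, ?_⟩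
      have hv : b₁.prod b₂ (Sum.inl i) = (b₁ i, 0) :=
        Prod.ext (b₁.prod_apply_inl_fst b₂ i) (b₁.prod_apply_inl_snd b₂ i)
      rw [hv, hφ]
      simp [hμ, Prod.smul_def]
    · obtain ⟨μ, hμ⟩ := hb₂ i
      refine ⟨μ, ?_⟩
      have hv : b₁.prod b₂ (Sum.inr i) = (0, b₂ i) :=
        Prod.ext (b₁.prod_apply_inr_fst b₂ i) (b₁.prod_apply_inr_snd b₂ i)
      rw [hv, hφ]
      simp [hμ, Prod.smul_def]
  · intro ψ
    have hfst : fst ℝ l₁ l₂ ∘ₗ (φ : (l₁ × l₂) →ₗ[ℝ] (l₁ × l₂)) =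
        (φ₁ : l₁ →ₗ[ℝ] l₁) ∘ₗ fst ℝ l₁ l₂ := by
      ext x <;> simp [hφ]
    have hsnd : snd ℝ l₁ l₂ ∘ₗ (φ : (l₁ × l₂) →ₗ[ℝ] (l₁ × l₂)) =
        (φ₂ : l₂ →ₗ[ℝ] l₂) ∘ₗ snd ℝ l₁ l₂ := by
      ext x <;> simp [hφ]
    rw [trace_prod_blocks ((φ : (l₁ × l₂) →ₗ[ℝ] (l₁ × l₂)) ∘ₗ (ψ : (l₁ × l₂) →ₗ[ℝ] (l₁ × l₂))),
      trace_prod_blocks (ψ : (l₁ × l₂) →ₗ[ℝ] (l₁ × l₂))]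
    have e1 : fst ℝ l₁ l₂ ∘ₗ ((φ : (l₁ × l₂) →ₗ[ℝ] (l₁ × l₂)) ∘ₗ (ψ : (l₁ × l₂) →ₗ[ℝ] (l₁ × l₂))) ∘ₗ inl ℝ l₁ l₂
        = (φ₁ : l₁ →ₗ[ℝ] l₁) ∘ₗ ((derBlockFst ψ : l₁ →ₗ[ℝ] l₁)) := by
      have : (derBlockFst ψ : l₁ →ₗ[ℝ] l₁) = fst ℝ l₁ l₂ ∘ₗ (ψ : (l₁ × l₂) →ₗ[ℝ] (l₁ × l₂)) ∘ₗ inl ℝ l₁ l₂ := rfl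
      rw [this, ← comp_assoc, ← comp_assoc, hfst, comp_assoc, comp_assoc]
    have e2 : snd ℝ l₁ l₂ ∘ₗ ((φ : (l₁ × l₂) →ₗ[ℝ] (l₁ × l₂)) ∘ₗ (ψ : (l₁ × l₂) →ₗ[ℝ] (l₁ × l₂))) ∘ₗ inr ℝ l₁ l₂
        = (φ₂ : l₂ →ₗ[ℝ] l₂) ∘ₗ ((derBlockSnd ψ : l₂ →ₗ[ℝ] l₂)) := by
      have : (derBlockSnd ψ : l₂ →ₗ[ℝ] l₂) = snd ℝ l₁ l₂ ∘ₗ (ψ : (l₁ × l₂) →ₗ[ℝ] (l₁ × l₂)) ∘ₗ inr ℝ l₁ l₂ := rfl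
      rw [this, ← comp_assoc, ← comp_assoc, hsnd, comp_assoc, comp_assoc]
    rw [e1, e2, h₁.2 (derBlockFst ψ), h₂.2 (derBlockSnd ψ)]
    rfl
end

section
/- Let (n,⟨·,·⟩) be a nilpotent metric Lie algebra whose Ricci operator satisfies Ric_n = c·id + Φ for some constant c ∈ ℝ and some derivation Φ of n. Then Tr(Φ ∘ ψ) = −c · Tr ψ for every derivation ψ of n. -/
open LieAlgebra Module LinearMap

/-- The right hand side of the defining identity for the Ricci operator. -/
noncomputable def ricRHS {g : Type*} [LieRing g] [LieAlgebra ℝ g] {ι : Type} [Fintype ι]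
    (ip : g → g → ℝ) (E : Basis ι ℝ g) (A : g →ₗ[ℝ] g) : ℝ :=
  ∑ i, ∑ j, ip (A ⁅E i, E j⁆ - ⁅A (E i), E j⁆ - ⁅E i, A (E j)⁆) ⁅E i, E j⁆

/-- Equation (2.7): if the Ricci operator of a nilpotent metric Lie algebra satisfies
`Ric = c·id + Φ` for a derivation `Φ`, then `Tr(Φ ∘ ψ) = -c · Tr ψ` for every derivation `ψ`. -/
theorem trace_einstein_derivation (n : Type) [LieRing n] [LieAlgebra ℝ n]
    [FiniteDimensional ℝ n] [LieRing.IsNilpotent n]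
    (ip : n → n → ℝ) (hip : IsInnerProduct n ip)
    (c : ℝ) (Φ : LieDerivation ℝ n n)
    (hric : ∀ (ι : Type) (_ : Fintype ι) (E : Basis ι ℝ n), IsONB ip E →
      ∀ A : n →ₗ[ℝ] n,
        trace ℝ n ((c • LinearMap.id + (Φ : n →ₗ[ℝ] n)) ∘ₗ A) = 4⁻¹ * ricRHS ip E A) :
    ∀ ψ : LieDerivation ℝ n n,
      trace ℝ n ((Φ : n →ₗ[ℝ] n) ∘ₗ (ψ : n →ₗ[ℝ] n)) = -c * trace ℝ n (ψ : n →ₗ[ℝ] n) := by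
  intro ψ
  obtain ⟨hsymm, hlin, hpos⟩ := hip
  have hzero : ∀ Y : n, ip 0 Y = 0 := by
    intro Y
    have := hlin 1 0 0 Y
    simp at this
    linarith
  -- build an inner product space structure
  letI core : InnerProductSpace.Core ℝ n :=
    { inner := ip
      conj_inner_symm := fun x y => by simpa using hsymm y x
      re_inner_nonneg := fun x => by
        by_cases hx : x = 0
        · simp [hx, hzero]
        · exact (hpos x hx).le
      add_left := fun x y z => by
        have := hlin 1 x y z
        simpa using this
      smul_left := fun x y r => by
        have := hlin r x 0 y
        simpa [hzero] using this
      definite := fun x hx => by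
        by_contra h
        exact (hpos x h).ne' hx }
  letI : NormedAddCommGroup n := core.toNormedAddCommGroup
  letI : InnerProductSpace ℝ n := InnerProductSpace.ofCore core.toCore
  let B := stdOrthonormalBasis ℝ n
  have honb : IsONB ip B.toBasis := by
    intro i j
    have h := orthonormal_iff_ite.mp B.orthonormal i j
    constructor
    · intro hij
      have : ip (B i) (B j) = if i = j then (1 : ℝ) else 0 := h
      simpa [hij, B.coe_toBasis] using this
    · intro hij
      have : ip (B i) (B j) = if i = j then (1 : ℝ) else 0 := h
      simpa [hij, B.coe_toBasis] using this
  have hψ := hric (Fin (Module.finrank ℝ n)) inferInstance B.toBasis honb (ψ : n →ₗ[ℝ] n)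
  have hRHS : ricRHS ip B.toBasis (ψ : n →ₗ[ℝ] n) = 0 := by
    unfold ricRHS
    apply Finset.sum_eq_zero
    intro i _
    apply Finset.sum_eq_zero
    intro j _
    have : (ψ : n →ₗ[ℝ] n) ⁅B.toBasis i, B.toBasis j⁆ -
        ⁅(ψ : n →ₗ[ℝ] n) (B.toBasis i), B.toBasis j⁆ -
        ⁅B.toBasis i, (ψ : n →ₗ[ℝ] n) (B.toBasis j)⁆ = 0 := by
      have h2 := ψ.apply_lie_eq_add (B.toBasis i) (B.toBasis j)
      have hc : ∀ x, (ψ : n →ₗ[ℝ] n) x = ψ x := fun _ => rfl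
      simp only [hc]
      rw [h2]; abel
    rw [this, hzero]
  rw [hRHS] at hψ
  have hexp : ((c • LinearMap.id + (Φ : n →ₗ[ℝ] n)) ∘ₗ (ψ : n →ₗ[ℝ] n)) =
      c • (ψ : n →ₗ[ℝ] n) + (Φ : n →ₗ[ℝ] n) ∘ₗ (ψ : n →ₗ[ℝ] n) := by
    ext x; simp
  rw [hexp, map_add, map_smul] at hψ
  simp only [mul_zero, smul_eq_mul] at hψ
  linarith
end

section
/- Let n be a two-step nilpotent Lie algebra of type (p,q) and let b be a linear complement of m = [n,n] in n. Then n belongs to the class O(p,q) if and only if the endomorphism φ of n acting as multiplication by μ on b and as multiplication by 2μ on m, where μ = (q+2p)/(q+4p), is a pre-Einstein derivation of n. -/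
open LieAlgebra Module LinearMap

/-- `n` is a two-step nilpotent Lie algebra of type `(p,q)`: `[[n,n],n] = 0`,
`dim n = p + q` and `dim [n,n] = p`. -/
def IsTwoStepOfType (n : Type*) [LieRing n] [LieAlgebra ℝ n] [FiniteDimensional ℝ n]
    (p q : ℕ) : Prop :=
  (∀ X Y Z : n, ⁅⁅X, Y⁆, Z⁆ = 0) ∧ finrank ℝ n = p + q ∧
    finrank ℝ (derivedSeries ℝ n 1) = p

/-- `n` belongs to the class `O(p,q)`: every derivation with zero trace has zero trace on the
derived algebra `[n,n]`. -/
def InClassO (n : Type*) [LieRing n] [LieAlgebra ℝ n] [FiniteDimensional ℝ n] : Prop :=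
  ∀ (ψ : LieDerivation ℝ n n)
    (h : ∀ x ∈ (derivedSeries ℝ n 1).toSubmodule, (ψ : n →ₗ[ℝ] n) x ∈
      (derivedSeries ℝ n 1).toSubmodule),
    trace ℝ n (ψ : n →ₗ[ℝ] n) = 0 →
    trace ℝ (derivedSeries ℝ n 1).toSubmodule (((ψ : n →ₗ[ℝ] n)).restrict h) = 0

/-- An endomorphism which is a pre-Einstein derivation. -/
def IsPreEinsteinEnd {l : Type*} [LieRing l] [LieAlgebra ℝ l] [FiniteDimensional ℝ l]
    (φ : l →ₗ[ℝ] l) : Prop :=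
  (∀ X Y : l, φ ⁅X, Y⁆ = ⁅φ X, Y⁆ + ⁅X, φ Y⁆) ∧
  (∃ (ι : Type) (b : Basis ι ℝ l), ∀ i, ∃ μ : ℝ, φ (b i) = μ • b i) ∧
  ∀ ψ : LieDerivation ℝ l l,
    trace ℝ l (φ ∘ₗ (ψ : l →ₗ[ℝ] l)) = trace ℝ l (ψ : l →ₗ[ℝ] l)

section AuxLemmas

variable {n : Type} [LieRing n] [LieAlgebra ℝ n] [FiniteDimensional ℝ n]

omit [FiniteDimensional ℝ n] in
lemma derived_span' :
    ((derivedSeries ℝ n 1).toSubmodule : Submodule ℝ n) =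
      Submodule.span ℝ {m | ∃ x ∈ (⊤ : LieIdeal ℝ n), ∃ y ∈ (⊤ : LieIdeal ℝ n), ⁅x, y⁆ = m} := by
  rw [derivedSeries_def, derivedSeriesOfIdeal_succ, derivedSeriesOfIdeal_zero]
  exact LieSubmodule.lieIdeal_oper_eq_linear_span' ..

omit [FiniteDimensional ℝ n] in
lemma mem_derived' (x y : n) : ⁅x, y⁆ ∈ (derivedSeries ℝ n 1).toSubmodule := by
  rw [LieSubmodule.mem_toSubmodule, derivedSeries_def, derivedSeriesOfIdeal_succ,
    derivedSeriesOfIdeal_zero]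
  exact LieSubmodule.lie_mem_lie trivial trivial

omit [FiniteDimensional ℝ n] in
lemma central' (htwo : ∀ X Y Z : n, ⁅⁅X, Y⁆, Z⁆ = 0) (z : n) :
    ∀ x ∈ (derivedSeries ℝ n 1).toSubmodule, ⁅x, z⁆ = 0 := by
  intro x hx
  rw [derived_span'] at hx
  refine Submodule.span_induction (p := fun x _ => ⁅x, z⁆ = 0) ?_ ?_ ?_ ?_ hx
  · rintro _ ⟨a, -, c, -, rfl⟩; exact htwo a c z
  · exact zero_lie z
  · intro a c _ _ ha hc; rw [add_lie, ha, hc, add_zero]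
  · intro t a _ ha; rw [smul_lie, ha, smul_zero]

omit [FiniteDimensional ℝ n] in
lemma derivation_preserves (ψ : LieDerivation ℝ n n) :
    ∀ x ∈ (derivedSeries ℝ n 1).toSubmodule,
      (ψ : n →ₗ[ℝ] n) x ∈ (derivedSeries ℝ n 1).toSubmodule := by
  intro x hx
  rw [derived_span'] at hx
  refine Submodule.span_induction
    (p := fun x _ => (ψ : n →ₗ[ℝ] n) x ∈ (derivedSeries ℝ n 1).toSubmodule) ?_ ?_ ?_ ?_ hx
  · rintro _ ⟨a, -, c, -, rfl⟩
    have : (ψ : n →ₗ[ℝ] n) ⁅a, c⁆ = ⁅a, ψ c⁆ - ⁅c, ψ a⁆ := ψ.apply_lie_eq_sub a c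
    rw [this]
    exact sub_mem (mem_derived' a (ψ c)) (mem_derived' c (ψ a))
  · simpa using Submodule.zero_mem _
  · intro a c _ _ ha hc; rw [map_add]; exact add_mem ha hc
  · intro t a _ ha; rw [map_smul]; exact Submodule.smul_mem _ t ha

lemma trace_phi_comp (b : Submodule ℝ n)
    (hb : IsCompl b (derivedSeries ℝ n 1).toSubmodule)
    (μ : ℝ) (φ : n →ₗ[ℝ] n)
    (hφb : ∀ x ∈ b, φ x = μ • x)
    (hφm : ∀ x ∈ (derivedSeries ℝ n 1).toSubmodule, φ x = (2 * μ) • x)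
    (f : n →ₗ[ℝ] n)
    (hf : ∀ x ∈ (derivedSeries ℝ n 1).toSubmodule, f x ∈ (derivedSeries ℝ n 1).toSubmodule) :
    trace ℝ n (φ ∘ₗ f) = μ * trace ℝ n f +
      μ * trace ℝ (derivedSeries ℝ n 1).toSubmodule (f.restrict hf) := by
  set m : Submodule ℝ n := (derivedSeries ℝ n 1).toSubmodule with hm
  set proj : n →ₗ[ℝ] m := m.linearProjOfIsCompl b hb.symm with hproj
  set π : n →ₗ[ℝ] n := m.subtype ∘ₗ proj with hπ
  have hφeq : φ = μ • LinearMap.id + μ • π := by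
    apply LinearMap.ext; intro x
    obtain ⟨xb, xm, hxb, hxm, rfl⟩ := Submodule.codisjoint_iff_exists_add_eq.mp hb.codisjoint x
    have h1 : proj xb = 0 := Submodule.linearProjOfIsCompl_apply_right' hb.symm hxb
    have h2 : proj xm = ⟨xm, hxm⟩ := Submodule.linearProjOfIsCompl_apply_left hb.symm ⟨xm, hxm⟩
    simp only [map_add, hφb xb hxb, hφm xm hxm, LinearMap.add_apply, LinearMap.smul_apply,
      LinearMap.id_apply, hπ, LinearMap.comp_apply, h1, h2, Submodule.coe_subtype,
      Submodule.coe_zero, map_zero]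
    module
  have hcomp : φ ∘ₗ f = μ • f + μ • (π ∘ₗ f) := by
    rw [hφeq, LinearMap.add_comp, LinearMap.smul_comp, LinearMap.smul_comp, LinearMap.id_comp]
  have hres : (proj ∘ₗ f) ∘ₗ m.subtype = f.restrict hf := by
    apply LinearMap.ext; intro x
    apply Subtype.ext
    have hfx : f ↑x ∈ m := hf _ x.2
    have : proj (f ↑x) = ⟨f ↑x, hfx⟩ :=
      Submodule.linearProjOfIsCompl_apply_left hb.symm ⟨f ↑x, hfx⟩
    simp [LinearMap.comp_apply, this, LinearMap.restrict_apply]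
  have htr : trace ℝ n (π ∘ₗ f) = trace ℝ m (f.restrict hf) := by
    have : π ∘ₗ f = m.subtype ∘ₗ (proj ∘ₗ f) := by rw [hπ, LinearMap.comp_assoc]
    rw [this, LinearMap.trace_comp_comm', hres]
  rw [hcomp, map_add, map_smul, map_smul, smul_eq_mul, smul_eq_mul, htr]

lemma trace_phi (b : Submodule ℝ n)
    (hb : IsCompl b (derivedSeries ℝ n 1).toSubmodule)
    (μ : ℝ) (φ : n →ₗ[ℝ] n)
    (hφb : ∀ x ∈ b, φ x = μ • x)
    (hφm : ∀ x ∈ (derivedSeries ℝ n 1).toSubmodule, φ x = (2 * μ) • x) :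
    trace ℝ n φ =
      μ * (finrank ℝ n) + μ * (finrank ℝ (derivedSeries ℝ n 1).toSubmodule) := by
  have hid : ∀ x ∈ (derivedSeries ℝ n 1).toSubmodule,
      LinearMap.id (R := ℝ) x ∈ (derivedSeries ℝ n 1).toSubmodule := fun x hx => hx
  have := trace_phi_comp b hb μ φ hφb hφm LinearMap.id hid
  rw [LinearMap.comp_id] at this
  rw [this, LinearMap.trace_id]
  congr 1
  have : (LinearMap.id (R := ℝ) (M := n)).restrict hid = LinearMap.id := by
    apply LinearMap.ext; intro x; apply Subtype.ext; simp [LinearMap.restrict_apply]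
  rw [this, LinearMap.trace_id]

lemma trace_phi_restrict (μ : ℝ) (φ : n →ₗ[ℝ] n)
    (hφm : ∀ x ∈ (derivedSeries ℝ n 1).toSubmodule, φ x = (2 * μ) • x)
    (hf : ∀ x ∈ (derivedSeries ℝ n 1).toSubmodule,
      φ x ∈ (derivedSeries ℝ n 1).toSubmodule) :
    trace ℝ (derivedSeries ℝ n 1).toSubmodule (φ.restrict hf) =
      (2 * μ) * (finrank ℝ (derivedSeries ℝ n 1).toSubmodule) := by
  have : φ.restrict hf = (2 * μ) • LinearMap.id := by
    apply LinearMap.ext; intro x; apply Subtype.ext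
    simp [LinearMap.restrict_apply, hφm _ x.2]
  rw [this, map_smul, LinearMap.trace_id, smul_eq_mul]

omit [FiniteDimensional ℝ n] in
lemma phi_leibniz (htwo : ∀ X Y Z : n, ⁅⁅X, Y⁆, Z⁆ = 0)
    (b : Submodule ℝ n) (hb : IsCompl b (derivedSeries ℝ n 1).toSubmodule)
    (μ : ℝ) (φ : n →ₗ[ℝ] n)
    (hφb : ∀ x ∈ b, φ x = μ • x)
    (hφm : ∀ x ∈ (derivedSeries ℝ n 1).toSubmodule, φ x = (2 * μ) • x) :
    ∀ X Y : n, φ ⁅X, Y⁆ = ⁅φ X, Y⁆ + ⁅X, φ Y⁆ := by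
  have hL : ∀ X Y : n, ⁅φ X, Y⁆ = μ • ⁅X, Y⁆ := by
    intro X Y
    obtain ⟨xb, xm, hxb, hxm, rfl⟩ := Submodule.codisjoint_iff_exists_add_eq.mp hb.codisjoint X
    rw [map_add, hφb xb hxb, hφm xm hxm, add_lie, add_lie, smul_lie, smul_lie,
      central' htwo Y xm hxm]
    simp
  have hR : ∀ X Y : n, ⁅X, φ Y⁆ = μ • ⁅X, Y⁆ := by
    intro X Y
    rw [← neg_neg ⁅X, φ Y⁆, ← lie_skew, hL, neg_neg, ← smul_neg, ← lie_skew, neg_neg]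
  intro X Y
  rw [hφm _ (mem_derived' X Y), hL, hR, two_mul, add_smul]

lemma eig_basis (b : Submodule ℝ n) (hb : IsCompl b (derivedSeries ℝ n 1).toSubmodule)
    (μ : ℝ) (φ : n →ₗ[ℝ] n)
    (hφb : ∀ x ∈ b, φ x = μ • x)
    (hφm : ∀ x ∈ (derivedSeries ℝ n 1).toSubmodule, φ x = (2 * μ) • x) :
    ∃ (ι : Type) (B : Basis ι ℝ n), ∀ i, ∃ ν : ℝ, φ (B i) = ν • B i := by
  set m : Submodule ℝ n := (derivedSeries ℝ n 1).toSubmodule with hm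
  refine ⟨Fin (finrank ℝ b) ⊕ Fin (finrank ℝ m),
    ((finBasis ℝ b).prod (finBasis ℝ m)).map (b.prodEquivOfIsCompl m hb), ?_⟩
  rintro (i | i)
  · refine ⟨μ, ?_⟩
    have hB : (((finBasis ℝ b).prod (finBasis ℝ m)).map (b.prodEquivOfIsCompl m hb))
        (Sum.inl i) = ↑(finBasis ℝ b i) := by
      simp [Basis.map_apply, Submodule.coe_prodEquivOfIsCompl']
    rw [hB]
    exact hφb _ (Submodule.coe_mem _)
  · refine ⟨2 * μ, ?_⟩
    have hB : (((finBasis ℝ b).prod (finBasis ℝ m)).map (b.prodEquivOfIsCompl m hb))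
        (Sum.inr i) = ↑(finBasis ℝ m i) := by
      simp [Basis.map_apply, Submodule.coe_prodEquivOfIsCompl']
    rw [hB]
    exact hφm _ (Submodule.coe_mem _)

end AuxLemmas


theorem classO_iff_test (n : Type) [LieRing n] [LieAlgebra ℝ n]
    [FiniteDimensional ℝ n] (p q : ℕ)
    (htwo : ∀ X Y Z : n, ⁅⁅X, Y⁆, Z⁆ = 0) (hdim : finrank ℝ n = p + q)
    (hdimm : finrank ℝ (derivedSeries ℝ n 1) = p)
    (b : Submodule ℝ n) (hb : IsCompl b (derivedSeries ℝ n 1).toSubmodule)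
    (φ : n →ₗ[ℝ] n)
    (hφb : ∀ x ∈ b, φ x = (((q : ℝ) + 2 * p) / ((q : ℝ) + 4 * p)) • x)
    (hφm : ∀ x ∈ (derivedSeries ℝ n 1).toSubmodule,
      φ x = (2 * (((q : ℝ) + 2 * p) / ((q : ℝ) + 4 * p))) • x) :
    (∀ (ψ : LieDerivation ℝ n n)
      (h : ∀ x ∈ (derivedSeries ℝ n 1).toSubmodule, (ψ : n →ₗ[ℝ] n) x ∈
        (derivedSeries ℝ n 1).toSubmodule),
      trace ℝ n (ψ : n →ₗ[ℝ] n) = 0 →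
      trace ℝ (derivedSeries ℝ n 1).toSubmodule (((ψ : n →ₗ[ℝ] n)).restrict h) = 0) ↔
    ((∀ X Y : n, φ ⁅X, Y⁆ = ⁅φ X, Y⁆ + ⁅X, φ Y⁆) ∧
    (∃ (ι : Type) (B : Basis ι ℝ n), ∀ i, ∃ ν : ℝ, φ (B i) = ν • B i) ∧
    ∀ ψ : LieDerivation ℝ n n,
      trace ℝ n (φ ∘ₗ (ψ : n →ₗ[ℝ] n)) = trace ℝ n (ψ : n →ₗ[ℝ] n)) := by
  set μ : ℝ := (((q : ℝ) + 2 * p) / ((q : ℝ) + 4 * p)) with hμdef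
  have hφm' : ∀ x ∈ (derivedSeries ℝ n 1).toSubmodule, φ x = (2 * μ) • x := hφm
  by_cases hpq : p + q = 0
  · -- degenerate case : n is trivial
    have hfr : finrank ℝ n = 0 := by rw [hdim, hpq]
    have hsub : Subsingleton n := finrank_zero_iff.mp hfr
    have hzero : ∀ g : n →ₗ[ℝ] n, g = 0 := fun g => LinearMap.ext fun x => Subsingleton.elim _ _
    constructor
    · intro _
      refine ⟨fun X Y => Subsingleton.elim _ _, ⟨Fin 0, Basis.empty n, fun i => i.elim0⟩, ?_⟩
      intro ψ
      rw [hzero (φ ∘ₗ (ψ : n →ₗ[ℝ] n)), hzero (ψ : n →ₗ[ℝ] n)]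
    · intro _ ψ h _
      have : ((ψ : n →ₗ[ℝ] n)).restrict h = 0 := by
        apply LinearMap.ext; intro x; apply Subtype.ext
        exact Subsingleton.elim _ _
      rw [this, map_zero]
  · -- main case
    have hP : (0:ℝ) ≤ (p:ℝ) := Nat.cast_nonneg p
    have hQ : (0:ℝ) ≤ (q:ℝ) := Nat.cast_nonneg q
    have hPQ : (0:ℝ) < (p:ℝ) + (q:ℝ) := by
      have := Nat.pos_of_ne_zero hpq
      exact_mod_cast this
    have h2p : (0:ℝ) < (q:ℝ) + 2 * p := by linarith
    have h4p : (0:ℝ) < (q:ℝ) + 4 * p := by linarith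
    have hμne : μ ≠ 0 := by
      rw [hμdef]; exact div_ne_zero (ne_of_gt h2p) (ne_of_gt h4p)
    have hder := phi_leibniz htwo b hb μ φ hφb hφm'
    have hbasis := eig_basis b hb μ φ hφb hφm'
    have hrkm : (finrank ℝ (derivedSeries ℝ n 1).toSubmodule : ℝ) = (p:ℝ) := by
      have : finrank ℝ (derivedSeries ℝ n 1).toSubmodule = finrank ℝ (derivedSeries ℝ n 1) :=
        rfl
      rw [this, hdimm]
    have hrkn : ((finrank ℝ n : ℕ) : ℝ) = (p:ℝ) + (q:ℝ) := by
      rw [hdim]; push_cast; ring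
    have hΦ : ∃ Φ : LieDerivation ℝ n n, (Φ : n →ₗ[ℝ] n) = φ := by
      refine ⟨⟨φ, fun a c => ?_⟩, rfl⟩
      have := hder a c
      rw [this, ← lie_skew c (φ a), sub_neg_eq_add, add_comm]
    obtain ⟨Φ, hΦcoe⟩ := hΦ
    have hφpres : ∀ x ∈ (derivedSeries ℝ n 1).toSubmodule,
        φ x ∈ (derivedSeries ℝ n 1).toSubmodule := fun x hx => by
      rw [hφm' x hx]; exact Submodule.smul_mem _ _ hx
    have hTrφ : trace ℝ n φ = μ * ((p:ℝ) + q) + μ * p := by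
      rw [trace_phi b hb μ φ hφb hφm', hrkm, hrkn]
    have hTrφm : trace ℝ (derivedSeries ℝ n 1).toSubmodule (φ.restrict hφpres) =
        (2 * μ) * p := by
      rw [trace_phi_restrict μ φ hφm' hφpres, hrkm]
    constructor
    · intro hO
      refine ⟨hder, hbasis, ?_⟩
      intro ψ
      have hψpres := derivation_preserves ψ
      have key := trace_phi_comp b hb μ φ hφb hφm' (ψ : n →ₗ[ℝ] n) hψpres
      set T := trace ℝ n (ψ : n →ₗ[ℝ] n) with hT
      set t := trace ℝ (derivedSeries ℝ n 1).toSubmodule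
        (((ψ : n →ₗ[ℝ] n)).restrict hψpres) with ht
      set χ : LieDerivation ℝ n n := (trace ℝ n φ) • ψ - T • Φ with hχ
      have hχcoe : (χ : n →ₗ[ℝ] n) = (trace ℝ n φ) • (ψ : n →ₗ[ℝ] n) - T • φ := by
        rw [hχ, LieDerivation.coe_sub_linearMap, LieDerivation.coe_smul_linearMap,
          LieDerivation.coe_smul_linearMap, hΦcoe]
      have hχpres : ∀ x ∈ (derivedSeries ℝ n 1).toSubmodule,
          (χ : n →ₗ[ℝ] n) x ∈ (derivedSeries ℝ n 1).toSubmodule := fun x hx => by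
        rw [hχcoe]
        exact sub_mem (Submodule.smul_mem _ _ (hψpres x hx))
          (Submodule.smul_mem _ _ (hφpres x hx))
      have hχtr : trace ℝ n (χ : n →ₗ[ℝ] n) = 0 := by
        rw [hχcoe, map_sub, map_smul, map_smul, smul_eq_mul, smul_eq_mul, ← hT]
        ring
      have hχres : ((χ : n →ₗ[ℝ] n)).restrict hχpres =
          (trace ℝ n φ) • (((ψ : n →ₗ[ℝ] n)).restrict hψpres) - T • (φ.restrict hφpres) := by
        apply LinearMap.ext; intro x; apply Subtype.ext
        simp [LinearMap.restrict_apply, hχcoe]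
      have h0 := hO χ hχpres hχtr
      rw [hχres, map_sub, map_smul, map_smul, smul_eq_mul, smul_eq_mul, ← ht,
        hTrφm, hTrφ] at h0
      rw [key]
      have h1 : μ * (((q:ℝ) + 2 * p) * t - 2 * p * T) = 0 := by linear_combination h0
      have h2 : ((q:ℝ) + 2 * p) * t = 2 * p * T := by
        rcases mul_eq_zero.mp h1 with h | h
        · exact absurd h hμne
        · linarith
      have h4p' : ((q:ℝ) + 4 * p) ≠ 0 := ne_of_gt h4p
      rw [hμdef]
      rw [div_mul_eq_mul_div, div_mul_eq_mul_div, ← add_div, div_eq_iff h4p']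
      linear_combination h2
    · intro hPE ψ h htr
      have key := trace_phi_comp b hb μ φ hφb hφm' (ψ : n →ₗ[ℝ] n) h
      rw [hPE.2.2 ψ, htr] at key
      have : μ * trace ℝ (derivedSeries ℝ n 1).toSubmodule
          (((ψ : n →ₗ[ℝ] n)).restrict h) = 0 := by linarith
      rcases mul_eq_zero.mp this with h' | h'
      · exact absurd h' hμne
      · exact h'

/-- Lemma 6.1 (1): a two-step nilpotent Lie algebra of type `(p,q)` belongs to `O(p,q)` if and
only if the endomorphism acting as `μ` on a complement of `[n,n]` and as `2μ` on `[n,n]`, with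
`μ = (q+2p)/(q+4p)`, is a pre-Einstein derivation. -/
theorem classO_iff_canonical_preEinstein (n : Type) [LieRing n] [LieAlgebra ℝ n]
    [FiniteDimensional ℝ n] (p q : ℕ) (h2 : IsTwoStepOfType n p q)
    (b : Submodule ℝ n) (hb : IsCompl b (derivedSeries ℝ n 1).toSubmodule)
    (φ : n →ₗ[ℝ] n)
    (hφb : ∀ x ∈ b, φ x = (((q : ℝ) + 2 * p) / ((q : ℝ) + 4 * p)) • x)
    (hφm : ∀ x ∈ (derivedSeries ℝ n 1).toSubmodule,
      φ x = (2 * (((q : ℝ) + 2 * p) / ((q : ℝ) + 4 * p))) • x) :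
    InClassO n ↔ IsPreEinsteinEnd φ := by
  obtain ⟨htwo, hdim, hdimm⟩ := h2
  exact classO_iff_test n p q htwo hdim hdimm b hb φ hφb hφm
end

section
/- Every nonsingular two-step nilpotent Lie algebra of type (p,q) belongs to the class O(p,q). -/
open LieAlgebra Module LinearMap

/-- A two-step nilpotent Lie algebra is nonsingular if `ad X : n → [n,n]` is surjective for
every `X ∉ [n,n]`. -/
def IsNonsingular (n : Type*) [LieRing n] [LieAlgebra ℝ n] [FiniteDimensional ℝ n] : Prop :=
  ∀ X : n, X ∉ derivedSeries ℝ n 1 →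
    ∀ Z ∈ derivedSeries ℝ n 1, ∃ Y : n, ⁅X, Y⁆ = Z

section ClassOAuxSection

open NormedSpace
open scoped Matrix

attribute [local instance] Matrix.linftyOpNormedAddCommGroup Matrix.linftyOpNormedRing
  Matrix.linftyOpNormedAlgebra

namespace ClassOAux


variable {k : ℕ}

private lemma perm_exists_ne {σ : Equiv.Perm (Fin k)} (hσ : σ ≠ 1) (i : Fin k) :
    ∃ j, j ≠ i ∧ σ j ≠ j := by
  obtain ⟨a, ha⟩ : ∃ a, σ a ≠ a := by
    by_contra hc
    push_neg at hc
    exact hσ (Equiv.ext hc)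
  by_cases hai : a = i
  · subst hai
    refine ⟨σ a, ha, fun hc => ha (σ.injective hc)⟩
  · exact ⟨a, hai, ha⟩

lemma hasDerivAt_det_exp_zero (X : Matrix (Fin k) (Fin k) ℝ) :
    HasDerivAt (fun t : ℝ => (exp (t • X)).det) X.trace 0 := by
  have h0 : HasDerivAt (fun u : ℝ => exp (u • X)) X 0 := by
    have h00 := hasDerivAt_exp_smul_const' (𝕂 := ℝ) X (0 : ℝ)
    simp only [zero_smul, exp_zero, mul_one] at h00
    exact h00
  have hent : ∀ i j : Fin k, HasDerivAt (fun u : ℝ => exp (u • X) i j) (X i j) 0 := by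
    intro i j
    let L : Matrix (Fin k) (Fin k) ℝ →ₗ[ℝ] ℝ := (LinearMap.proj j) ∘ₗ (LinearMap.proj i)
    exact (LinearMap.toContinuousLinearMap L).hasFDerivAt.comp_hasDerivAt 0 h0
  have hone : exp ((0:ℝ) • X) = (1 : Matrix (Fin k) (Fin k) ℝ) := by
    rw [zero_smul, exp_zero]
  have hdet : (fun t : ℝ => (exp (t • X)).det) =
      fun t : ℝ => ∑ σ : Equiv.Perm (Fin k),
        ((Equiv.Perm.sign σ : ℤ) : ℝ) * ∏ i : Fin k, exp (t • X) (σ i) i := by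
    funext t
    exact Matrix.det_apply' _
  rw [hdet]
  have hterm : ∀ σ : Equiv.Perm (Fin k),
      HasDerivAt (fun t : ℝ => ((Equiv.Perm.sign σ : ℤ) : ℝ) * ∏ i : Fin k, exp (t • X) (σ i) i)
        (((Equiv.Perm.sign σ : ℤ) : ℝ) *
          ∑ i : Fin k, (∏ j ∈ Finset.univ.erase i, exp ((0:ℝ) • X) (σ j) j) • X (σ i) i) 0 := by
    intro σ
    exact (HasDerivAt.fun_finsetProd fun i _ => hent (σ i) i).const_mul _
  have hsum := HasDerivAt.fun_sum (u := Finset.univ) fun σ _ => hterm σ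
  refine hsum.congr_deriv ?_
  rw [Finset.sum_eq_single (1 : Equiv.Perm (Fin k))]
  · simp [hone, Matrix.one_apply_eq, Matrix.trace, Matrix.diag]
  · intro σ _ hσ
    have hz : ∀ i : Fin k,
        (∏ j ∈ Finset.univ.erase i, (1 : Matrix (Fin k) (Fin k) ℝ) (σ j) j) = 0 := by
      intro i
      obtain ⟨j, hji, hj⟩ := perm_exists_ne hσ i
      exact Finset.prod_eq_zero (Finset.mem_erase.mpr ⟨hji, Finset.mem_univ j⟩)
        (Matrix.one_apply_ne hj)
    simp [hone, hz]
  · intro hmem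
    exact absurd (Finset.mem_univ _) hmem

lemma det_exp_smul (X : Matrix (Fin k) (Fin k) ℝ) (t : ℝ) :
    (exp (t • X)).det = Real.exp (X.trace * t) := by
  set g := fun t : ℝ => (exp (t • X)).det with hg
  have hmul : ∀ s t : ℝ, g (s + t) = g s * g t := by
    intro s t
    simp only [hg]
    rw [add_smul, Matrix.exp_add_of_commute _ _ (((Commute.refl X).smul_left s).smul_right t),
      Matrix.det_mul]
  have hd : ∀ t : ℝ, HasDerivAt g (X.trace * g t) t := by
    intro t
    have h1 : HasDerivAt (fun s : ℝ => s - t) 1 t := by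
      simpa using (hasDerivAt_id t).sub_const t
    have h2 : HasDerivAt ((fun u : ℝ => (exp (u • X)).det) ∘ fun s : ℝ => s - t)
        (X.trace * 1) t := by
      refine HasDerivAt.comp t ?_ h1
      simpa using hasDerivAt_det_exp_zero X
    have h3 := h2.mul_const (g t)
    have hfun : (fun s : ℝ => ((fun u : ℝ => (exp (u • X)).det) ∘ fun s : ℝ => s - t) s * g t)
        = g := by
      funext s
      simp only [Function.comp]
      rw [hg]
      dsimp only
      rw [← hmul, sub_add_cancel]
    rw [hfun] at h3
    simpa using h3
  have hprod : ∀ u : ℝ, HasDerivAt (fun u : ℝ => g u * Real.exp (-X.trace * u)) 0 u := by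
    intro u
    have he : HasDerivAt (fun u : ℝ => Real.exp (-X.trace * u))
        (-X.trace * Real.exp (-X.trace * u)) u := by
      have h4 : HasDerivAt (fun u : ℝ => -X.trace * u) (-X.trace) u := by
        simpa using (hasDerivAt_id u).const_mul (-X.trace)
      simpa [Function.comp_def, mul_comm] using (Real.hasDerivAt_exp (-X.trace * u)).comp u h4
    have := (hd u).fun_mul he
    refine this.congr_deriv ?_
    ring
  have hconst := is_const_of_deriv_eq_zero (fun u => (hprod u).differentiableAt)
    (fun u => (hprod u).deriv)
  have hkey : g t * Real.exp (-X.trace * t) = 1 := by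
    have := hconst t 0
    simpa [hg, exp_zero] using this
  have hne : Real.exp (X.trace * t) ≠ 0 := Real.exp_ne_zero _
  have : -X.trace * t = -(X.trace * t) := by ring
  rw [this, Real.exp_neg] at hkey
  field_simp at hkey
  linarith [hkey]



variable {p q : ℕ}

/-- `M ↦ M *ᵥ ξ` as a linear map. -/
def mulVecRight (ξ : Fin p → ℝ) : Matrix (Fin p) (Fin p) ℝ →ₗ[ℝ] (Fin p → ℝ) where
  toFun M := M *ᵥ ξ
  map_add' M N := Matrix.add_mulVec _ _ _
  map_smul' c M := Matrix.smul_mulVec c M ξ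

lemma intertwine (A : Matrix (Fin q) (Fin q) ℝ) (D : Matrix (Fin p) (Fin p) ℝ)
    (G : (Fin p → ℝ) →ₗ[ℝ] Matrix (Fin q) (Fin q) ℝ)
    (hrel : ∀ ξ, G (D *ᵥ ξ) = Aᵀ * G ξ + G ξ * A) (t : ℝ) (ξ : Fin p → ℝ) :
    G (exp (t • D) *ᵥ ξ) = exp (t • Aᵀ) * G ξ * exp (t • A) := by
  set H : ℝ → Matrix (Fin q) (Fin q) ℝ :=
    fun t => exp (t • (-Aᵀ)) * G (exp (t • D) *ᵥ ξ) * exp (t • (-A)) with hH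
  have hderiv : ∀ u : ℝ, HasDerivAt H 0 u := by
    intro u
    have hE1 : HasDerivAt (fun s : ℝ => exp (s • (-Aᵀ)))
        (exp (u • (-Aᵀ)) * (-Aᵀ)) u := hasDerivAt_exp_smul_const _ u
    have hE3 : HasDerivAt (fun s : ℝ => exp (s • (-A)))
        (exp (u • (-A)) * (-A)) u := hasDerivAt_exp_smul_const _ u
    have hexp : HasDerivAt (fun s : ℝ => exp (s • D)) (D * exp (u • D)) u :=
      hasDerivAt_exp_smul_const' D u
    have hmid : HasDerivAt (fun s : ℝ => G (exp (s • D) *ᵥ ξ))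
        (G (D *ᵥ (exp (u • D) *ᵥ ξ))) u := by
      have h := (LinearMap.toContinuousLinearMap
        (G ∘ₗ mulVecRight ξ)).hasFDerivAt.comp_hasDerivAt u hexp
      have h2 : (LinearMap.toContinuousLinearMap (G ∘ₗ mulVecRight ξ)) (D * exp (u • D))
          = G (D *ᵥ (exp (u • D) *ᵥ ξ)) := by
        simp [mulVecRight, Matrix.mulVec_mulVec]
      exact h.congr_deriv h2
    have hmid' : HasDerivAt (fun s : ℝ => G (exp (s • D) *ᵥ ξ))
        (Aᵀ * G (exp (u • D) *ᵥ ξ) + G (exp (u • D) *ᵥ ξ) * A) u := by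
      rw [← hrel]; exact hmid
    have htot := (hE1.fun_mul hmid').fun_mul hE3
    have hcomm : A * exp (u • (-A)) = exp (u • (-A)) * A := by
      have hc : Commute A (u • (-A)) := ((Commute.refl A).neg_right).smul_right u
      exact hc.exp_right.eq
    set E1 := exp (u • (-Aᵀ))
    set E3 := exp (u • (-A))
    set M := G (exp (u • D) *ᵥ ξ)
    have hval : (E1 * -Aᵀ * M + E1 * (Aᵀ * M + M * A)) * E3 + E1 * M * (E3 * -A) = 0 := by
      have expand : (E1 * -Aᵀ * M + E1 * (Aᵀ * M + M * A)) * E3 + E1 * M * (E3 * -A)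
          = E1 * M * (A * E3) - E1 * M * (E3 * A) := by
        noncomm_ring
      rw [expand, hcomm, sub_self]
    rw [hval] at htot
    exact htot
  have hconst := is_const_of_deriv_eq_zero (fun u => (hderiv u).differentiableAt)
    (fun u => (hderiv u).deriv) t 0
  have hH0 : H 0 = G ξ := by
    simp [hH, exp_zero]
  rw [hH0] at hconst
  have h1 : exp (t • Aᵀ) * exp (t • (-Aᵀ)) = 1 := by
    rw [← Matrix.exp_add_of_commute _ _ (((Commute.refl Aᵀ).neg_right).smul_left t
      |>.smul_right t)]
    rw [smul_neg, add_neg_cancel, exp_zero]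
  have h3 : exp (t • (-A)) * exp (t • A) = 1 := by
    rw [← Matrix.exp_add_of_commute _ _ (((Commute.refl A).neg_left).smul_left t
      |>.smul_right t), smul_neg, neg_add_cancel, exp_zero]
  have := congrArg (fun Z => exp (t • Aᵀ) * Z * exp (t • A)) hconst
  rw [hH] at this
  calc G (exp (t • D) *ᵥ ξ)
      = (exp (t • Aᵀ) * exp (t • (-Aᵀ))) * G (exp (t • D) *ᵥ ξ) *
        (exp (t • (-A)) * exp (t • A)) := by rw [h1, h3, one_mul, mul_one]
    _ = exp (t • Aᵀ) * (exp (t • (-Aᵀ)) * G (exp (t • D) *ᵥ ξ) * exp (t • (-A))) *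
        exp (t • A) := by noncomm_ring
    _ = exp (t • Aᵀ) * G ξ * exp (t • A) := by rw [this]

lemma core {p q : ℕ} (hp : 0 < p) (hq : 0 < q)
    (A : Matrix (Fin q) (Fin q) ℝ) (D : Matrix (Fin p) (Fin p) ℝ)
    (G : (Fin p → ℝ) →ₗ[ℝ] Matrix (Fin q) (Fin q) ℝ)
    (hGreg : ∀ ξ : Fin p → ℝ, ξ ≠ 0 → (G ξ).det ≠ 0)
    (hrel : ∀ ξ, G (D *ᵥ ξ) = Aᵀ * G ξ + G ξ * A)
    (htr : A.trace + D.trace = 0) : D.trace = 0 := by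
  haveI : Nonempty (Fin p) := ⟨⟨0, hp⟩⟩
  haveI : Nonempty (Fin q) := ⟨⟨0, hq⟩⟩
  set f : (Fin p → ℝ) → ℝ := fun ξ => |(G ξ).det| with hf
  have hcont : Continuous f :=
    (Continuous.matrix_det (LinearMap.continuous_of_finiteDimensional G)).abs
  set S := Metric.sphere (0 : Fin p → ℝ) 1 with hS
  have hSne : S.Nonempty := by
    obtain ⟨v, hv⟩ := exists_norm_eq (Fin p → ℝ) (zero_le_one (α := ℝ))
    exact ⟨v, by simpa [hS, mem_sphere_zero_iff_norm] using hv⟩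
  obtain ⟨ξ₁, hξ₁S, hmin⟩ := (isCompact_sphere (0 : Fin p → ℝ) 1).exists_isMinOn hSne
    hcont.continuousOn
  obtain ⟨ξ₂, hξ₂S, hmax⟩ := (isCompact_sphere (0 : Fin p → ℝ) 1).exists_isMaxOn hSne
    hcont.continuousOn
  set c₁ := f ξ₁ with hc₁def
  set c₂ := f ξ₂ with hc₂def
  have hnorm₁ : ‖ξ₁‖ = 1 := mem_sphere_zero_iff_norm.mp hξ₁S
  have hc₁ : 0 < c₁ := by
    refine abs_pos.mpr (hGreg ξ₁ ?_)
    intro h0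
    rw [h0] at hnorm₁
    simp at hnorm₁
  have hc₂0 : 0 ≤ c₂ := abs_nonneg _
  -- homogeneity bounds
  have hlow : ∀ v : Fin p → ℝ, c₁ * ‖v‖ ^ q ≤ f v := by
    intro v
    rcases eq_or_ne v 0 with rfl | hv
    · simp [hf, Matrix.det_zero, norm_zero, zero_pow hq.ne']
    · have hnv : (0:ℝ) < ‖v‖ := norm_pos_iff.mpr hv
      set u := ‖v‖⁻¹ • v with hu
      have hun : ‖u‖ = 1 := by
        rw [hu, norm_smul, norm_inv, norm_norm, inv_mul_cancel₀ hnv.ne']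
      have huv : ‖v‖ • u = v := by
        rw [hu, smul_smul, mul_inv_cancel₀ hnv.ne', one_smul]
      have hfv : f v = ‖v‖ ^ q * f u := by
        conv_lhs => rw [← huv]
        rw [hf]
        dsimp only
        rw [map_smul, Matrix.det_smul, Fintype.card_fin, abs_mul, abs_pow, abs_norm]
      rw [hfv, mul_comm]
      have h2 : c₁ ≤ f u := hmin (mem_sphere_zero_iff_norm.mpr hun)
      nlinarith [pow_pos hnv q]
  have hup : ∀ v : Fin p → ℝ, f v ≤ c₂ * ‖v‖ ^ q := by
    intro v
    rcases eq_or_ne v 0 with rfl | hv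
    · simp [hf, Matrix.det_zero, norm_zero, zero_pow hq.ne']
    · have hnv : (0:ℝ) < ‖v‖ := norm_pos_iff.mpr hv
      set u := ‖v‖⁻¹ • v with hu
      have hun : ‖u‖ = 1 := by
        rw [hu, norm_smul, norm_inv, norm_norm, inv_mul_cancel₀ hnv.ne']
      have huv : ‖v‖ • u = v := by
        rw [hu, smul_smul, mul_inv_cancel₀ hnv.ne', one_smul]
      have hfv : f v = ‖v‖ ^ q * f u := by
        conv_lhs => rw [← huv]
        rw [hf]
        dsimp only
        rw [map_smul, Matrix.det_smul, Fintype.card_fin, abs_mul, abs_pow, abs_norm]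
      rw [hfv, mul_comm]
      have h2 : f u ≤ c₂ := hmax (mem_sphere_zero_iff_norm.mpr hun)
      nlinarith [pow_pos hnv q]
  -- flow identity
  have hflow : ∀ (t : ℝ) (ξ : Fin p → ℝ),
      f (exp (t • D) *ᵥ ξ) = Real.exp (2 * A.trace * t) * f ξ := by
    intro t ξ
    rw [hf]
    dsimp only
    rw [intertwine A D G hrel t ξ, Matrix.det_mul, Matrix.det_mul, det_exp_smul,
      det_exp_smul, Matrix.trace_transpose]
    have : Real.exp (A.trace * t) * (G ξ).det * Real.exp (A.trace * t)
        = Real.exp (2 * A.trace * t) * (G ξ).det := by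
      rw [show (2 : ℝ) * A.trace * t = A.trace * t + A.trace * t by ring, Real.exp_add]
      ring
    rw [this, abs_mul, abs_of_pos (Real.exp_pos _)]
  -- entry bound
  set κ := (c₂ / c₁) ^ ((q : ℝ)⁻¹) with hκ
  have hκ0 : 0 ≤ κ := Real.rpow_nonneg (div_nonneg hc₂0 hc₁.le) _
  have hentry : ∀ (t : ℝ) (i j : Fin p),
      |exp (t • D) i j| ≤ κ * Real.exp (2 * A.trace * t / q) := by
    intro t i j
    set w := exp (t • D) *ᵥ Pi.single j 1 with hw
    have hwi : exp (t • D) i j = w i := by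
      rw [hw]
      simp [Matrix.mulVec, dotProduct, Pi.single_apply]
    have h1 : |exp (t • D) i j| ≤ ‖w‖ := by
      rw [hwi, ← Real.norm_eq_abs]
      exact norm_le_pi_norm w i
    have hsing : ‖(Pi.single j 1 : Fin p → ℝ)‖ ≤ 1 := by
      refine (pi_norm_le_iff_of_nonneg zero_le_one).mpr fun i => ?_
      rcases eq_or_ne i j with rfl | hij
      · simp
      · simp [Pi.single_apply, hij]
    have h2 : c₁ * ‖w‖ ^ q ≤ Real.exp (2 * A.trace * t) * c₂ := by
      calc c₁ * ‖w‖ ^ q ≤ f w := hlow w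
        _ = Real.exp (2 * A.trace * t) * f (Pi.single j 1) := hflow t _
        _ ≤ Real.exp (2 * A.trace * t) * (c₂ * ‖(Pi.single j 1 : Fin p → ℝ)‖ ^ q) :=
            mul_le_mul_of_nonneg_left (hup _) (Real.exp_pos _).le
        _ ≤ Real.exp (2 * A.trace * t) * c₂ := by
            have hpow : ‖(Pi.single j 1 : Fin p → ℝ)‖ ^ q ≤ 1 :=
              pow_le_one₀ (norm_nonneg _) hsing
            exact mul_le_mul_of_nonneg_left (mul_le_of_le_one_right hc₂0 hpow)
              (Real.exp_pos _).le
    have h3 : ‖w‖ ^ q ≤ (c₂ / c₁) * Real.exp (2 * A.trace * t) := by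
      rw [div_mul_eq_mul_div, le_div_iff₀ hc₁]
      nlinarith [h2]
    have h4 : ‖w‖ ≤ ((c₂ / c₁) * Real.exp (2 * A.trace * t)) ^ ((q : ℝ)⁻¹) := by
      have := Real.rpow_le_rpow (by positivity) h3 (by positivity : (0:ℝ) ≤ (q : ℝ)⁻¹)
      rwa [← Real.rpow_natCast ‖w‖ q, ← Real.rpow_mul (norm_nonneg _),
        mul_inv_cancel₀ (by exact_mod_cast hq.ne' : (q:ℝ) ≠ 0), Real.rpow_one] at this
    have h5 : ((c₂ / c₁) * Real.exp (2 * A.trace * t)) ^ ((q : ℝ)⁻¹)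
        = κ * Real.exp (2 * A.trace * t / q) := by
      rw [Real.mul_rpow (div_nonneg hc₂0 hc₁.le) (Real.exp_pos _).le,
        Real.rpow_def_of_pos (Real.exp_pos _), Real.log_exp]
      simp [hκ, div_eq_mul_inv]
    exact h1.trans (h4.trans_eq h5)
  -- determinant growth bound
  have hdetb : ∀ t : ℝ, Real.exp (D.trace * t)
      ≤ (p.factorial : ℝ) * (κ * Real.exp (2 * A.trace * t / q)) ^ p := by
    intro t
    have h1 : Real.exp (D.trace * t) = |(exp (t • D)).det| := by
      rw [det_exp_smul, abs_of_pos (Real.exp_pos _)]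
    rw [h1, Matrix.det_apply']
    set b := κ * Real.exp (2 * A.trace * t / q) with hb
    calc |∑ σ : Equiv.Perm (Fin p),
          ((Equiv.Perm.sign σ : ℤ) : ℝ) * ∏ i : Fin p, exp (t • D) (σ i) i|
        ≤ ∑ σ : Equiv.Perm (Fin p),
          |((Equiv.Perm.sign σ : ℤ) : ℝ) * ∏ i : Fin p, exp (t • D) (σ i) i| :=
          Finset.abs_sum_le_sum_abs _ _
      _ ≤ ∑ _σ : Equiv.Perm (Fin p), b ^ p := by
          refine Finset.sum_le_sum fun σ _ => ?_
          have hsgn : |((Equiv.Perm.sign σ : ℤ) : ℝ)| = 1 := by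
            rcases Int.units_eq_one_or (Equiv.Perm.sign σ) with h | h <;> simp [h]
          rw [abs_mul, hsgn, one_mul, Finset.abs_prod]
          calc ∏ i : Fin p, |exp (t • D) (σ i) i| ≤ ∏ _i : Fin p, b :=
                Finset.prod_le_prod (fun _ _ => abs_nonneg _) (fun i _ => hentry t (σ i) i)
            _ = b ^ p := by rw [Finset.prod_const, Finset.card_univ, Fintype.card_fin]
      _ = (p.factorial : ℝ) * b ^ p := by
          rw [Finset.sum_const, Finset.card_univ, Fintype.card_perm, Fintype.card_fin,
            nsmul_eq_mul]
  set s := D.trace - 2 * A.trace * p / q with hs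
  set C := (p.factorial : ℝ) * κ ^ p with hC
  have hkey : ∀ t : ℝ, Real.exp (s * t) ≤ C := by
    intro t
    have h1 := hdetb t
    have h2 : (κ * Real.exp (2 * A.trace * t / q)) ^ p
        = κ ^ p * Real.exp (2 * A.trace * (p : ℝ) / q * t) := by
      rw [mul_pow, ← Real.exp_nat_mul]
      congr 1
      field_simp
    rw [h2] at h1
    have h3 : Real.exp (D.trace * t) ≤ C * Real.exp (2 * A.trace * (p : ℝ) / q * t) := by
      rw [hC, mul_assoc]
      exact h1
    have h4 : Real.exp (s * t) = Real.exp (D.trace * t)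
        / Real.exp (2 * A.trace * (p : ℝ) / q * t) := by
      rw [← Real.exp_sub]
      congr 1
      rw [hs]
      ring
    rw [h4, div_le_iff₀ (Real.exp_pos _)]
    exact h3
  have hC1 : (1:ℝ) ≤ C := by simpa using hkey 0
  have hCpos : (0:ℝ) < C := lt_of_lt_of_le one_pos hC1
  have hs0 : s = 0 := by
    by_contra hne
    have hk := hkey ((Real.log C + 1) / s)
    have harg : s * ((Real.log C + 1) / s) = Real.log C + 1 := by
      field_simp
    rw [harg, Real.exp_add, Real.exp_log hCpos] at hk
    nlinarith [Real.exp_one_gt_d9]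
  have hq' : (0:ℝ) < q := by exact_mod_cast hq
  have hp' : (0:ℝ) < p := by exact_mod_cast hp
  have hDval : D.trace = 2 * A.trace * p / q := by
    have := hs0
    rw [hs] at this
    linarith
  have hA : A.trace = -D.trace := by linarith
  rw [hA] at hDval
  have h7 : D.trace * ((q:ℝ) + 2 * p) = 0 := by
    field_simp at hDval
    linear_combination hDval
  rcases mul_eq_zero.mp h7 with h | h
  · exact h
  · exfalso
    nlinarith



lemma trace_decomp {V : Type*} [AddCommGroup V] [Module ℝ V] [FiniteDimensional ℝ V]
    (f : V →ₗ[ℝ] V) (M W : Submodule ℝ V) (hW : IsCompl M W)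
    (hf : ∀ x ∈ M, f x ∈ M) :
    trace ℝ V f = trace ℝ M (f.restrict hf) +
      trace ℝ W ((W.linearProjOfIsCompl M hW.symm) ∘ₗ (f ∘ₗ W.subtype)) := by
  set e := Submodule.prodEquivOfIsCompl M W hW with he
  set B := f.restrict hf with hB
  set C := (W.linearProjOfIsCompl M hW.symm) ∘ₗ (f ∘ₗ W.subtype) with hC
  set πM := M.linearProjOfIsCompl W hW with hπM
  set πW := W.linearProjOfIsCompl M hW.symm with hπW
  set Err : (M × W) →ₗ[ℝ] (M × W) :=
    (LinearMap.inl ℝ M W) ∘ₗ ((πM ∘ₗ (f ∘ₗ W.subtype)) ∘ₗ (LinearMap.snd ℝ M W)) with hErr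
  have hkey : (e.symm.conj f) = (B.prodMap C) + Err := by
    apply LinearMap.ext
    intro z
    apply e.injective
    have h1 : e ((e.symm.conj f) z) = f (e z) := by
      rw [LinearEquiv.conj_apply]
      simp only [LinearMap.comp_apply, LinearEquiv.coe_coe, LinearEquiv.symm_symm]
      rw [LinearEquiv.apply_symm_apply]
    rw [h1]
    obtain ⟨m, w⟩ := z
    have h2 : e (m, w) = (m : V) + (w : V) := rfl
    rw [h2, map_add]
    have h3 : f (m : V) = ((B m : M) : V) := by
      rw [hB]
      simp [LinearMap.restrict_apply]
    have h4 : f (w : V) = ((πM (f (w : V)) : M) : V) + ((πW (f (w : V)) : W) : V) := by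
      rw [hπM, hπW]
      exact (Submodule.projection_add_projection_eq_self hW (f (w:V))).symm
    rw [h3, h4]
    have h5 : e (((B.prodMap C) + Err) (m, w))
        = ((B m : M) : V) + ((πM (f (w : V)) : M) : V) + ((C w : W) : V) := by
      simp only [LinearMap.add_apply, LinearMap.prodMap_apply, hErr]
      simp only [LinearMap.comp_apply, LinearMap.snd_apply, LinearMap.inl_apply]
      have : e ((B m, C w) + (πM (f (W.subtype w)), 0))
          = ((B m : M) : V) + ((πM (f (W.subtype w)) : M) : V) + ((C w : W) : V) := by
        rw [Prod.mk_add_mk, add_zero]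
        have := Submodule.coe_prodEquivOfIsCompl' (p := M) (q := W) hW
          (B m + πM (f (W.subtype w)), C w)
        rw [he]
        rw [this]
        push_cast
        ring
      exact this
    rw [h5]
    have h6 : ((C w : W) : V) = ((πW (f (w : V)) : W) : V) := by
      rw [hC]
      simp
    rw [h6, add_assoc]
  have htr1 : trace ℝ V f = trace ℝ (M × W) (e.symm.conj f) :=
    (LinearMap.trace_conj' f e.symm).symm
  have hnil : IsNilpotent Err := by
    refine ⟨2, ?_⟩
    apply LinearMap.ext
    rintro ⟨m, w⟩
    simp [pow_two, hErr]
  have htrErr : trace ℝ (M × W) Err = 0 := by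
    have := LinearMap.isNilpotent_trace_of_isNilpotent hnil
    exact this.eq_zero
  rw [htr1, hkey, map_add, htrErr, add_zero, LinearMap.trace_prodMap']


end ClassOAux

end ClassOAuxSection

open scoped Matrix

set_option maxHeartbeats 1000000 in
/-- Lemma 6.3: every nonsingular two-step nilpotent Lie algebra of type `(p,q)` belongs to
the class `O(p,q)`. -/
theorem classO_of_nonsingular (n : Type) [LieRing n] [LieAlgebra ℝ n] [FiniteDimensional ℝ n]
    (p q : ℕ) (h2 : IsTwoStepOfType n p q) (hns : IsNonsingular n) :
    InClassO n := by
  obtain ⟨hstep, -⟩ := h2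
  intro ψ h htr0
  classical
  set M : Submodule ℝ n := (derivedSeries ℝ n 1).toSubmodule with hMdef
  set ψₗ : n →ₗ[ℝ] n := (ψ : n →ₗ[ℝ] n) with hψₗ
  have hMspan : M = Submodule.span ℝ {m : n | ∃ x y : n, ⁅x, y⁆ = m} := by
    have h1 : derivedSeries ℝ n 1 = ⁅(⊤ : LieIdeal ℝ n), (⊤ : LieIdeal ℝ n)⁆ := by
      rw [LieAlgebra.derivedSeries_def, LieAlgebra.derivedSeriesOfIdeal_succ,
        LieAlgebra.derivedSeriesOfIdeal_zero]
    rw [hMdef, h1]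
    rw [LieSubmodule.lieIdeal_oper_eq_linear_span']
    congr 1
    ext m
    constructor
    · rintro ⟨x, -, y, -, rfl⟩
      exact ⟨x, y, rfl⟩
    · rintro ⟨x, y, rfl⟩
      exact ⟨x, trivial, y, trivial, rfl⟩
  have hbr : ∀ x y : n, ⁅x, y⁆ ∈ M := by
    intro x y
    rw [hMspan]
    exact Submodule.subset_span ⟨x, y, rfl⟩
  have hcen : ∀ m, m ∈ M → ∀ y : n, ⁅m, y⁆ = 0 := by
    intro m hm
    rw [hMspan] at hm
    refine Submodule.span_induction ?_ ?_ ?_ ?_ hm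
    · rintro _ ⟨x, y, rfl⟩ z
      exact hstep x y z
    · intro z
      exact zero_lie z
    · intro a b _ _ ha hb z
      rw [add_lie, ha z, hb z, add_zero]
    · intro c a _ ha z
      rw [smul_lie, ha z, smul_zero]
  rcases Nat.eq_zero_or_pos (finrank ℝ M) with hp0 | hp
  · haveI : Subsingleton M := finrank_zero_iff.mp hp0
    have hall : ∀ f : M →ₗ[ℝ] M, trace ℝ M f = 0 := fun f => by
      rw [Subsingleton.elim f 0, map_zero]
    exact hall _
  obtain ⟨W, hW⟩ := Submodule.exists_isCompl M
  set πM := M.linearProjOfIsCompl W hW with hπM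
  set πW := W.linearProjOfIsCompl M hW.symm with hπW
  set B : M →ₗ[ℝ] M := ψₗ.restrict h with hB
  set C : W →ₗ[ℝ] W := πW ∘ₗ (ψₗ ∘ₗ W.subtype) with hC
  have hq : 0 < finrank ℝ W := by
    rcases Nat.eq_zero_or_pos (finrank ℝ W) with hq0 | hq
    · exfalso
      have hWbot : W = ⊥ := Submodule.finrank_eq_zero.mp hq0
      have hMtop : M = ⊤ := by
        have := hW.sup_eq_top
        rwa [hWbot, sup_bot_eq] at this
      have hzero : ∀ x y : n, ⁅x, y⁆ = 0 := fun x y =>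
        hcen x (hMtop ▸ Submodule.mem_top) y
      have hMbot : M = ⊥ := by
        rw [hMspan]
        refine le_bot_iff.mp (Submodule.span_le.mpr ?_)
        rintro _ ⟨x, y, rfl⟩
        rw [hzero x y]
        exact Submodule.zero_mem ⊥
      rw [hMbot] at hp
      simp [finrank_bot] at hp
    · exact hq
  set bM : Basis (Fin (finrank ℝ M)) ℝ M := Module.finBasis ℝ M with hbM
  set bW : Basis (Fin (finrank ℝ W)) ℝ W := Module.finBasis ℝ W with hbW
  set Amat := LinearMap.toMatrix bW bW C with hAmat
  set Xmat := LinearMap.toMatrix bM bM B with hXmat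
  set Dmat := Xmatᵀ with hDmat
  set βM : W →ₗ[ℝ] W →ₗ[ℝ] M := LinearMap.mk₂ ℝ
      (fun x y => (⟨⁅(x : n), (y : n)⁆, hbr _ _⟩ : M))
      (fun x x' y => Subtype.ext (by simp [add_lie]))
      (fun c x y => Subtype.ext (by simp [smul_lie]))
      (fun x y y' => Subtype.ext (by simp [lie_add]))
      (fun c x y => Subtype.ext (by simp [lie_smul])) with hβM
  have hβapp : ∀ x y : W, ((βM x y : M) : n) = ⁅(x : n), (y : n)⁆ := fun x y => rfl
  set valL : (Fin (finrank ℝ M) → ℝ) →ₗ[ℝ] (M →ₗ[ℝ] ℝ) :=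
    { toFun := fun ξ => ∑ k, ξ k • bM.coord k,
      map_add' := fun ξ η => by
        simp only [Pi.add_apply, add_smul]
        rw [Finset.sum_add_distrib],
      map_smul' := fun c ξ => by
        simp only [Pi.smul_apply, smul_eq_mul, RingHom.id_apply, ← smul_smul]
        rw [Finset.smul_sum] } with hvalL
  have hval : ∀ (ξ : Fin (finrank ℝ M) → ℝ) (m : M),
      valL ξ m = ξ ⬝ᵥ (fun k => bM.repr m k) := by
    intro ξ m
    simp [hvalL, dotProduct, LinearMap.sum_apply, Basis.coord_apply]
  set G : (Fin (finrank ℝ M) → ℝ) →ₗ[ℝ] Matrix (Fin (finrank ℝ W)) (Fin (finrank ℝ W)) ℝ :=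
    { toFun := fun ξ => Matrix.of fun i j => valL ξ (βM (bW i) (bW j)),
      map_add' := fun ξ η => by
        ext i j
        simp [Matrix.add_apply],
      map_smul' := fun c ξ => by
        ext i j
        simp [Matrix.smul_apply] } with hG
  have hGapp : ∀ (ξ : Fin (finrank ℝ M) → ℝ) (i j : Fin (finrank ℝ W)),
      G ξ i j = valL ξ (βM (bW i) (bW j)) := fun ξ i j => rfl
  have claimA : ∀ (ξ : Fin (finrank ℝ M) → ℝ) (m : M),
      valL (Dmat *ᵥ ξ) m = valL ξ (B m) := by
    intro ξ m
    rw [hval, hval, hDmat, Matrix.mulVec_transpose, ← Matrix.dotProduct_mulVec]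
    congr 1
    rw [hXmat]
    exact LinearMap.toMatrix_mulVec_repr bM bM B m
  have hproj : ∀ z : n, z = ((πM z : M) : n) + ((πW z : W) : n) := fun z =>
    (Submodule.projection_add_projection_eq_self hW z).symm
  have hder : ∀ x y : W, B (βM x y) = βM (C x) y + βM x (C y) := by
    intro x y
    apply Subtype.ext
    have hrest : ((B (βM x y) : M) : n) = ψₗ ⁅(x : n), (y : n)⁆ := rfl
    have hlie : ψₗ ⁅(x : n), (y : n)⁆ = ⁅(x : n), ψₗ (y : n)⁆ + ⁅ψₗ (x : n), (y : n)⁆ :=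
      ψ.apply_lie_eq_add (x : n) (y : n)
    have h1 : ⁅ψₗ (x : n), (y : n)⁆ = ⁅((C x : W) : n), (y : n)⁆ := by
      conv_lhs => rw [hproj (ψₗ (x : n))]
      rw [add_lie, hcen _ (πM (ψₗ (x : n))).2 _, zero_add]
      rfl
    have h2 : ⁅(x : n), ψₗ (y : n)⁆ = ⁅(x : n), ((C y : W) : n)⁆ := by
      conv_lhs => rw [hproj (ψₗ (y : n))]
      rw [lie_add, ← lie_skew _ ((πM (ψₗ (y : n))) : n), hcen _ (πM (ψₗ (y : n))).2 _,
        neg_zero, zero_add]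
      rfl
    rw [hrest, hlie, h1, h2]
    have hcoe : ((βM (C x) y + βM x (C y) : M) : n)
        = ⁅((C x : W) : n), (y : n)⁆ + ⁅(x : n), ((C y : W) : n)⁆ := by
      rw [Submodule.coe_add, hβapp, hβapp]
    rw [hcoe, add_comm]
  have hrel : ∀ ξ, G (Dmat *ᵥ ξ) = Amatᵀ * G ξ + G ξ * Amat := by
    intro ξ
    ext i j
    rw [Matrix.add_apply, Matrix.mul_apply, Matrix.mul_apply]
    rw [hGapp, claimA, hder (bW i) (bW j), map_add]
    have hsum1 : valL ξ (βM (C (bW i)) (bW j)) = ∑ l, Amatᵀ i l * G ξ l j := by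
      calc valL ξ (βM (C (bW i)) (bW j))
          = valL ξ (βM (∑ l, bW.repr (C (bW i)) l • bW l) (bW j)) := by
            rw [Basis.sum_repr]
        _ = ∑ l, bW.repr (C (bW i)) l * valL ξ (βM (bW l) (bW j)) := by
            rw [map_sum βM]
            simp [LinearMap.sum_apply, LinearMap.map_smul, LinearMap.smul_apply, smul_eq_mul]
        _ = ∑ l, Amatᵀ i l * G ξ l j := by
            refine Finset.sum_congr rfl fun l _ => ?_
            rw [Matrix.transpose_apply, hAmat, LinearMap.toMatrix_apply, hGapp]
    have hsum2 : valL ξ (βM (bW i) (C (bW j))) = ∑ l, G ξ i l * Amat l j := by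
      calc valL ξ (βM (bW i) (C (bW j)))
          = valL ξ (βM (bW i) (∑ l, bW.repr (C (bW j)) l • bW l)) := by
            rw [Basis.sum_repr]
        _ = ∑ l, bW.repr (C (bW j)) l * valL ξ (βM (bW i) (bW l)) := by
            rw [map_sum (βM (bW i))]
            simp [map_sum, LinearMap.map_smul, smul_eq_mul]
        _ = ∑ l, G ξ i l * Amat l j := by
            refine Finset.sum_congr rfl fun l _ => ?_
            rw [hAmat, LinearMap.toMatrix_apply, hGapp]
            ring
    rw [hsum1, hsum2]
  have hGreg : ∀ ξ, ξ ≠ 0 → (G ξ).det ≠ 0 := by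
    intro ξ hξ hdet
    obtain ⟨v, hv0, hv⟩ := (Matrix.exists_mulVec_eq_zero_iff).mpr hdet
    set w : W := ∑ l, v l • bW l with hw
    have hrep : ∀ k, bW.repr w k = v k := by
      intro k
      rw [hw]
      simp [map_sum, map_smul, Basis.repr_self, Finsupp.single_apply]
    have hwne : w ≠ 0 := by
      intro hw0
      apply hv0
      funext k
      rw [← hrep k, hw0, map_zero]
      rfl
    have hbasis : ∀ i, valL ξ (βM (bW i) w) = 0 := by
      intro i
      have hvi : (G ξ *ᵥ v) i = 0 := by rw [hv]; rfl
      calc valL ξ (βM (bW i) w) = ∑ j, v j * valL ξ (βM (bW i) (bW j)) := by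
            rw [hw]
            simp [map_sum, LinearMap.map_smul, smul_eq_mul]
        _ = 0 := by
            rw [← hvi]
            simp only [Matrix.mulVec, dotProduct, hGapp]
            exact Finset.sum_congr rfl fun j _ => mul_comm _ _
    have hpair : ∀ x : W, valL ξ (βM x w) = 0 := by
      intro x
      conv_lhs => rw [← Basis.sum_repr bW x]
      rw [map_sum βM]
      simp [LinearMap.sum_apply, LinearMap.smul_apply, hbasis]
    have hskew : ∀ x : W, valL ξ (βM w x) = 0 := by
      intro x
      have hanti : βM w x = - βM x w := by
        apply Subtype.ext
        rw [hβapp]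
        have : ((-(βM x w) : M) : n) = -⁅(x : n), (w : n)⁆ := by
          rw [← hβapp x w]
          rfl
        rw [this, lie_skew]
      rw [hanti, map_neg, hpair, neg_zero]
    have hwM : (w : n) ∉ derivedSeries ℝ n 1 := by
      intro hmem
      have hmem' : (w : n) ∈ M := hmem
      have hzero : (w : n) = 0 := Submodule.disjoint_def.mp hW.disjoint _ hmem' w.2
      exact hwne (Subtype.ext hzero)
    obtain ⟨k₀, hk₀⟩ : ∃ k, ξ k ≠ 0 := by
      by_contra hc
      push_neg at hc
      exact hξ (funext hc)
    have hZmem : ((bM k₀ : M) : n) ∈ derivedSeries ℝ n 1 := (bM k₀).2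
    obtain ⟨y, hy⟩ := hns (w : n) hwM ((bM k₀ : M) : n) hZmem
    have hy' : ⁅(w : n), ((πW y : W) : n)⁆ = ((bM k₀ : M) : n) := by
      rw [← hy]
      conv_rhs => rw [hproj y]
      rw [lie_add, ← lie_skew _ ((πM y : M) : n), hcen _ (πM y).2, neg_zero, zero_add]
    have hβval : βM w (πW y) = bM k₀ := Subtype.ext (by rw [hβapp]; exact hy')
    have hfin := hskew (πW y)
    rw [hβval, hval] at hfin
    simp only [dotProduct, Basis.repr_self, Finsupp.single_apply] at hfin
    rw [Finset.sum_eq_single k₀ (fun b _ hb => by rw [if_neg (Ne.symm hb), mul_zero])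
      (by simp)] at hfin
    simp at hfin
    exact hk₀ hfin
  have htrd := ClassOAux.trace_decomp ψₗ M W hW h
  have htrB : trace ℝ M B = Dmat.trace := by
    rw [hDmat, Matrix.trace_transpose, hXmat]
    exact LinearMap.trace_eq_matrix_trace ℝ bM B
  have htrC : trace ℝ W C = Amat.trace := by
    rw [hAmat]
    exact LinearMap.trace_eq_matrix_trace ℝ bW C
  have htrsum : Amat.trace + Dmat.trace = 0 := by
    rw [← htrB, ← htrC]
    rw [htr0] at htrd
    linarith [htrd]
  have hzero := ClassOAux.core hp hq Amat Dmat G hGreg hrel htrsum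
  have hgoal : trace ℝ M B = 0 := by rw [htrB]; exact hzero
  exact hgoal
end
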